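/- arXiv:2605.18123 — 9 statements merged into one kernel-verified Lean document; each statement's English description precedes it below -/
import Mathlib

section
/- Fix integers k ≥ 2 and p' ≥ k' ≥ 2, and reals α ∈ (0,1) and γ ∈ (0,1]. Then for every N ∈ ℕ there exist n ≥ N, a set X, and subsets S_1, …, S_n of X such that: (1) the number of k-element subsets I of {1,…,n} with ⋂_{i∈I} S_i ≠ ∅ is strictly greater than α·binom(n,k); and (2) for every J ⊆ {1,…,n} with |J| ≥ γ·n, the family {S_i : i ∈ J} fails the (p',k')-property, i.e., there exist distinct indices i_1, …, i_{p'} ∈ J such that for every k'-element subset L of {1,…,p'} we have ⋂_{ℓ∈L} S_{i_ℓ} = ∅. -/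
/-!
Split the `n = m * s` indices into `m` blocks of size `s` and let `S i` be the set of functions
that pick `i` from its block. Sets `S i` with `i ∈ J` have a common point exactly when the indices
in `J` lie in distinct blocks. A `k`-subset of indices meets some block twice for at most
`s * n * binom(n, k - 2) = O(binom(n, k) / n)` choices, so the first property holds for large
`m`. If `γ * s > p'`, then by pigeonhole every `J` with `|J| ≥ γ n` contains `p'` indices
from one block, and any two of their sets are disjoint.
-/

/-- `consCount S k` is the number of `k`-element index subsets `J` of `{1,…,n}` such that
`⋂ i ∈ J, S i` is non-empty (the cardinality of `Cons_k(S̄)`). -/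
noncomputable def consCount {X : Type*} {n : ℕ} (S : Fin n → Set X) (k : ℕ) : ℕ :=
  {J : Finset (Fin n) | J.card = k ∧ (⋂ i ∈ J, S i).Nonempty}.ncard

open Finset Filter

section ColorChoiceSets

variable {ι β : Type*} (c : ι → β)

def colorChoiceSets (i : ι) : Set (β → ι) := {f | f (c i) = i}

theorem biInter_colorChoiceSets_nonempty [Nonempty ι] {J : Finset ι} (hJ : Set.InjOn c J) :
    (⋂ i ∈ J, colorChoiceSets c i).Nonempty :=
  ⟨Function.invFunOn c J, Set.mem_iInter₂.2 fun _ hi =>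
    hJ (Function.invFunOn_mem ⟨_, hi, rfl⟩) hi (Function.invFunOn_eq ⟨_, hi, rfl⟩)⟩

theorem disjoint_colorChoiceSets {i j : ι} (hij : i ≠ j) (hc : c i = c j) :
    Disjoint (colorChoiceSets c i) (colorChoiceSets c j) :=
  Set.disjoint_left.2 fun f (hi : f (c i) = i) (hj : f (c j) = j) =>
    hij (hi.symm.trans ((congrArg f hc).trans hj))

theorem exists_injective_mapsTo_colorClass [Fintype β] [Nonempty β] [DecidableEq β] {p : ℕ}
    {J : Finset ι} (hJ : Fintype.card β * p ≤ #J) :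
    ∃ g : Fin p → ι, Function.Injective g ∧ (∀ ℓ, g ℓ ∈ J) ∧
      ∀ ℓ ℓ', c (g ℓ) = c (g ℓ') := by
  obtain ⟨b, -, hb⟩ := exists_le_card_fiber_of_mul_le_card_of_maps_to (f := c)
    (fun _ _ => mem_univ _) univ_nonempty (by rwa [card_univ])
  obtain ⟨e⟩ := Function.Embedding.nonempty_of_card_le
    (α := Fin p) (β := {x // x ∈ {x ∈ J | c x = b}}) (by simpa using hb)
  have he ℓ := mem_filter.1 (e ℓ).2
  exact ⟨fun ℓ => e ℓ, Subtype.val_injective.comp e.injective, fun ℓ => (he ℓ).1,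
    fun ℓ ℓ' => (he ℓ).2.trans (he ℓ').2.symm⟩

theorem exists_injective_biInter_colorChoiceSets_eq_empty [Fintype β] [Nonempty β]
    [DecidableEq β] {p : ℕ} {J : Finset ι} (hJ : Fintype.card β * p ≤ #J) :
    ∃ g : Fin p → ι, Function.Injective g ∧ (∀ ℓ, g ℓ ∈ J) ∧
      ∀ L : Finset (Fin p), 1 < #L → ⋂ ℓ ∈ L, colorChoiceSets c (g ℓ) = ∅ := by
  obtain ⟨g, hg, hgJ, hgc⟩ := exists_injective_mapsTo_colorClass c hJ
  refine ⟨g, hg, hgJ, fun L hL => Set.eq_empty_of_forall_notMem fun f hf => ?_⟩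
  obtain ⟨a, ha, b, hb, hab⟩ := one_lt_card.1 hL
  rw [Set.mem_iInter₂] at hf
  exact (disjoint_colorChoiceSets c (hg.ne hab) (hgc a b)).ne_of_mem (hf a ha) (hf b hb) rfl

variable [Fintype ι] [DecidableEq ι] [DecidableEq β]

theorem card_sameColorPairs_le {s : ℕ} (hc : ∀ b, #{j | c j = b} ≤ s) :
    #{q : ι × ι | q.1 ≠ q.2 ∧ c q.1 = c q.2} ≤ s * Fintype.card ι := by
  refine card_le_mul_card_image_of_maps_to (f := Prod.fst) (fun _ _ => mem_univ _) s
    fun i _ => ?_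
  refine (card_le_card_of_injOn Prod.snd (t := {j | c j = c i}) (fun q hq => ?_)
    fun q hq q' hq' h => Prod.ext ?_ h).trans (hc (c i))
  · simp only [coe_filter, Set.mem_ofPred_eq, mem_filter, mem_univ, true_and] at hq ⊢
    rw [← hq.2, hq.1.2]
  · simp only [coe_filter, Set.mem_ofPred_eq, mem_filter, mem_univ, true_and] at hq hq'
    rw [hq.2, hq'.2]

open Classical in
theorem card_powersetCard_not_injOn_le {s : ℕ} (hc : ∀ b, #{j | c j = b} ≤ s) (k : ℕ) :
    #((powersetCard (k + 2) (univ : Finset ι)).filter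
        fun J : Finset ι => ¬ Set.InjOn c (J : Set ι)) ≤
      s * Fintype.card ι * (Fintype.card ι).choose k := by
  set pairs : Finset (ι × ι) := {q | q.1 ≠ q.2 ∧ c q.1 = c q.2}
  calc _ ≤ #(pairs.biUnion fun q => {J ∈ powersetCard (k + 2) univ | {q.1, q.2} ⊆ J}) := by
        refine card_le_card fun J hJ => ?_
        simp only [mem_filter, Set.InjOn, not_forall] at hJ
        obtain ⟨hJk, a, ha, b, hb, hab, hne⟩ := hJ
        exact mem_biUnion.2 ⟨(a, b), by simp [pairs, hne, hab],
          mem_filter.2 ⟨hJk, insert_subset ha (singleton_subset_iff.2 hb)⟩⟩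
    _ ≤ ∑ q ∈ pairs, #{J ∈ powersetCard (k + 2) univ | {q.1, q.2} ⊆ J} := card_biUnion_le
    _ ≤ ∑ _q ∈ pairs, (Fintype.card ι).choose k := sum_le_sum fun q hq => by
        have hq2 : #{q.1, q.2} = 2 := card_pair (mem_filter.1 hq).2.1
        rw [card_filter_powersetCard_subset _ _ _ (subset_univ _) (by omega), hq2,
          card_univ, Nat.add_sub_cancel]
        exact Nat.choose_le_choose k (Nat.sub_le _ _)
    _ = #pairs * (Fintype.card ι).choose k := by rw [sum_const, smul_eq_mul]
    _ ≤ s * Fintype.card ι * (Fintype.card ι).choose k :=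
        Nat.mul_le_mul_right _ (card_sameColorPairs_le c hc)

end ColorChoiceSets

theorem cast_choose_add_two_mul (n k : ℕ) (hkn : k + 2 ≤ n) :
    (n.choose (k + 2) * ((k + 2) * (k + 1)) : ℝ) = n.choose k * ((n - k) * (n - k - 1)) := by
  have h₁ := Nat.choose_succ_right_eq n (k + 1)
  have h₂ := Nat.choose_succ_right_eq n k
  rw [Nat.sub_add_eq] at h₁
  have : ((n.choose (k + 2) * ((k + 2) * (k + 1)) : ℕ) : ℝ) =
      ((n.choose k * ((n - k) * (n - k - 1)) : ℕ) : ℝ) := by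
    congr 1
    calc n.choose (k + 2) * ((k + 2) * (k + 1)) = n.choose (k + 1) * (k + 1) * (n - k - 1) := by
          rw [← mul_assoc, h₁]; ring
      _ = _ := by rw [h₂]; ring
  push_cast [Nat.cast_sub (by omega : k ≤ n), Nat.cast_sub (by omega : 1 ≤ n - k)] at this
  linarith

theorem eventually_mul_choose_lt (s k : ℕ) {ε : ℝ} (hε : 0 < ε) :
    ∀ᶠ n : ℕ in atTop, (s * n * n.choose k : ℝ) < ε * n.choose (k + 2) := by
  filter_upwards [eventually_ge_atTop (2 * k + 2),
    eventually_gt_atTop ⌈4 * s * (k + 2) ^ 2 / ε⌉₊] with n hkn hsn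
  have hn : (4 * s * (k + 2) ^ 2 / ε : ℝ) < n := Nat.lt_of_ceil_lt hsn
  rw [div_lt_iff₀ hε] at hn
  have hkn' : (2 * k + 2 : ℝ) ≤ n := by exact_mod_cast hkn
  have hchoose : (0 : ℝ) < n.choose k := by exact_mod_cast Nat.choose_pos (by omega)
  have hsq : (n / 2) * (n / 2) ≤ ((n - k) * (n - k - 1) : ℝ) :=
    mul_le_mul (by linarith) (by linarith) (by positivity) (by linarith)
  have key : (s * n * ((k + 2) * (k + 1)) : ℝ) < ε * ((n - k) * (n - k - 1)) := by
    calc (s * n * ((k + 2) * (k + 1)) : ℝ) ≤ n * (4 * s * (k + 2) ^ 2) / 4 := by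
          have : (0 : ℝ) ≤ s * n := by positivity
          nlinarith
      _ < n * (n * ε) / 4 := by gcongr; linarith
      _ = ε * ((n / 2) * (n / 2)) := by ring
      _ ≤ ε * ((n - k) * (n - k - 1)) := by gcongr
  refine lt_of_mul_lt_mul_right (a := ((k + 2) * (k + 1) : ℝ)) ?_ (by positivity)
  calc (s * n * n.choose k * ((k + 2) * (k + 1)) : ℝ)
      = n.choose k * (s * n * ((k + 2) * (k + 1))) := by ring
    _ < n.choose k * (ε * ((n - k) * (n - k - 1))) := by gcongr
    _ = ε * n.choose (k + 2) * ((k + 2) * (k + 1)) := by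
        rw [mul_assoc ε, cast_choose_add_two_mul n k (by omega)]; ring

theorem lt_consCount_colorChoiceSets {β : Type*} [DecidableEq β] {n s k : ℕ} (c : Fin n → β)
    (hc : ∀ b, #{j | c j = b} ≤ s) {α : ℝ}
    (h : (s * n * n.choose k : ℝ) < (1 - α) * n.choose (k + 2)) :
    α * n.choose (k + 2) < consCount (colorChoiceSets c) (k + 2) := by
  classical
  set good := (powersetCard (k + 2) (univ : Finset (Fin n))).filter
    fun J : Finset (Fin n) => Set.InjOn c (J : Set (Fin n))
  set bad := (powersetCard (k + 2) (univ : Finset (Fin n))).filter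
    fun J : Finset (Fin n) => ¬ Set.InjOn c (J : Set (Fin n))
  have hsplit : #good + #bad = #(powersetCard (k + 2) (univ : Finset (Fin n))) :=
    card_filter_add_card_filter_not _
  have hbad : #bad ≤ s * n * n.choose k := by
    simpa only [Fintype.card_fin] using card_powersetCard_not_injOn_le c hc k
  rw [card_powersetCard, card_univ, Fintype.card_fin] at hsplit
  have hgood : #good ≤ consCount (colorChoiceSets c) (k + 2) := by
    rw [consCount, ← Set.ncard_coe_finset]
    refine Set.ncard_le_ncard (fun J hJ => ?_) (Set.toFinite _)
    obtain ⟨hJk, hJc⟩ := mem_filter.1 hJ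
    rw [mem_powersetCard] at hJk
    obtain ⟨i, -⟩ := card_pos.1 (by rw [hJk.2]; omega)
    have : Nonempty (Fin n) := ⟨i⟩
    exact ⟨hJk.2, biInter_colorChoiceSets_nonempty c hJc⟩
  have hsplitR : (#good + #bad : ℝ) = n.choose (k + 2) := by exact_mod_cast hsplit
  have hbadR : (#bad : ℝ) ≤ s * n * n.choose k := by exact_mod_cast hbad
  have hgoodR : (#good : ℝ) ≤ consCount (colorChoiceSets c) (k + 2) := by exact_mod_cast hgood
  linarith

theorem card_filter_fst_equiv_le {ι β γ : Type*} [Fintype ι] [Fintype γ] [DecidableEq β]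
    (e : ι ≃ β × γ) (b : β) : #{i | (e i).1 = b} ≤ Fintype.card γ :=
  card_le_card_of_injOn (fun i => (e i).2) (fun _ _ => mem_coe.2 (mem_univ _))
    fun _ hi _ hj h =>
      e.injective <| Prod.ext ((mem_filter.1 hi).2.trans (mem_filter.1 hj).2.symm) h

theorem robust_counterexample_general (k p' k' : ℕ) (hk : 2 ≤ k) (hk' : 2 ≤ k')
    (α γ : ℝ) (hα1 : α < 1) (hγ0 : 0 < γ) :
    ∀ N : ℕ, ∃ n : ℕ, N ≤ n ∧ ∃ (X : Type) (S : Fin n → Set X),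
      (α * (n.choose k : ℝ) < (consCount S k : ℝ)) ∧
      ∀ J : Finset (Fin n), γ * (n : ℝ) ≤ (J.card : ℝ) →
        ∃ g : Fin p' → Fin n, Function.Injective g ∧ (∀ ℓ, g ℓ ∈ J) ∧
          ∀ L : Finset (Fin p'), L.card = k' → ⋂ ℓ ∈ L, S (g ℓ) = ∅ := by
  intro N
  obtain ⟨k, rfl⟩ : ∃ j, k = j + 2 := ⟨k - 2, by omega⟩
  obtain ⟨s, hs⟩ := exists_nat_gt (p' / γ)
  have hs0 : 0 < s := by exact_mod_cast (div_nonneg (Nat.cast_nonneg p') hγ0.le).trans_lt hs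
  rw [div_lt_iff₀ hγ0] at hs
  obtain ⟨m, hcount, hNm⟩ := ((tendsto_id.atTop_mul_const' hs0).eventually
    (eventually_mul_choose_lt s k (sub_pos.2 hα1))).and (eventually_gt_atTop N) |>.exists
  have : Nonempty (Fin m) := ⟨⟨0, by omega⟩⟩
  let block (i : Fin (m * s)) : Fin m := (finProdFinEquiv.symm i).1
  refine ⟨m * s, by nlinarith, Fin m → Fin (m * s), colorChoiceSets block,
    lt_consCount_colorChoiceSets block (card_filter_fst_equiv_le _) ?_, fun J hJ => ?_⟩
  · simpa using hcount
  have hJ' : Fintype.card (Fin m) * p' ≤ #J := by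
    rw [Fintype.card_fin]
    exact_mod_cast (by push_cast at hJ ⊢; nlinarith : (m * p' : ℝ) ≤ #J)
  obtain ⟨g, hg, hgJ, hempty⟩ := exists_injective_biInter_colorChoiceSets_eq_empty block hJ'
  exact ⟨g, hg, hgJ, fun L hL => hempty L (by omega)⟩

/-- Fix integers `k ≥ 2` and `p' ≥ k' ≥ 2`, and reals `α ∈ (0,1)`, `γ ∈ (0,1]`. Then for
every `N` there exist `n ≥ N`, a set `X` and subsets `S_1, …, S_n` of `X` such that:
(1) more than an `α`-fraction of the `k`-element subfamilies intersect, i.e. the number of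
`k`-element subsets `I` of `{1,…,n}` with `⋂_{i∈I} S_i ≠ ∅` is `> α·binom(n,k)`; and
(2) for every `J ⊆ {1,…,n}` with `|J| ≥ γ·n` the induced subfamily fails the
`(p',k')`-property: there are distinct indices `i_1, …, i_{p'} ∈ J` such that every
`k'`-element subset `L` of `{1,…,p'}` has `⋂_{ℓ∈L} S_{i_ℓ} = ∅`. -/
theorem robust_counterexample (k p' k' : ℕ) (hk : 2 ≤ k) (hk' : 2 ≤ k') (hp'k' : k' ≤ p')
    (α γ : ℝ) (hα0 : 0 < α) (hα1 : α < 1) (hγ0 : 0 < γ) (hγ1 : γ ≤ 1) :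
    ∀ N : ℕ, ∃ n : ℕ, N ≤ n ∧ ∃ (X : Type) (S : Fin n → Set X),
      (α * (n.choose k : ℝ) < (consCount S k : ℝ)) ∧
      ∀ J : Finset (Fin n), γ * (n : ℝ) ≤ (J.card : ℝ) →
        ∃ g : Fin p' → Fin n, Function.Injective g ∧ (∀ ℓ, g ℓ ∈ J) ∧
          ∀ L : Finset (Fin p'), L.card = k' → ⋂ ℓ ∈ L, S (g ℓ) = ∅ :=
  robust_counterexample_general k p' k' hk hk' α γ hα1 hγ0
end

section
/- Let X be a set, t ≥ 1, and for each i ∈ {1,…,t} let 𝓕_i be a family of subsets of X satisfying FHP_{k_i}. Then the family 𝓕 := { S_1 ∪ ⋯ ∪ S_t : S_i ∈ 𝓕_i for each i } satisfies FHP_k, where k := (k_1 + ⋯ + k_t) − t + 1. -/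
/-- The family `F` satisfies `FHP(k, α, β)`. -/
def FHP {X : Type*} (F : Set (Set X)) (k : ℕ) (α β : ℝ) : Prop :=
  ∀ (n : ℕ) (S : Fin n → Set X), (∀ i, S i ∈ F) →
    α * (n.choose k : ℝ) ≤ (consCount S k : ℝ) →
    ∃ J : Finset (Fin n), β * (n : ℝ) ≤ (J.card : ℝ) ∧ (⋂ i ∈ J, S i).Nonempty

/-- The family `F` satisfies `FHP_k`. -/
def FHPk {X : Type*} (F : Set (Set X)) (k : ℕ) : Prop :=
  ∀ α : ℝ, 0 < α → ∃ β : ℝ, 0 < β ∧ FHP F k α β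


/-!
Write `m = k₁ + ⋯ + kₜ + 1 - t`. If `S₁, …, Sₙ` are unions `Sⱼ = ⋃ᵢ gⱼᵢ` with `gⱼᵢ ∈ 𝓕ᵢ` and
`x` lies in `⋂_{j ∈ J} Sⱼ` for an `m`-set `J`, then colouring each `j ∈ J` by an `i` with
`x ∈ gⱼᵢ`, the pigeonhole principle gives a colour `i` and a `kᵢ`-subset `J' ⊆ J` with
`x ∈ ⋂_{j ∈ J'} gⱼᵢ`. Each `kᵢ`-set lies in `C(n - kᵢ, m - kᵢ)` sets of size `m`, and
`C(n, kᵢ) C(n - kᵢ, m - kᵢ) = C(n, m) C(m, kᵢ)`, so a positive proportion of the `m`-sets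
being consistent forces, for some `i`, a positive proportion of the `kᵢ`-sets of the `gⱼᵢ` to
be consistent; `FHP_{kᵢ}` of `𝓕ᵢ` then yields a large intersecting subfamily of the `gⱼᵢ`,
hence of the `Sⱼ`.
-/

open Finset Filter Topology

section

variable {X : Type*}

namespace FHPk

variable {F : Set (Set X)} {k : ℕ}

theorem nonempty (h : FHPk F k) (hk : 1 ≤ k) : Nonempty X := by
  obtain ⟨β, -, hβ⟩ := h 1 one_pos
  obtain ⟨-, -, x, -⟩ := hβ 0 Fin.elim0 (fun j => j.elim0) (by simp [Nat.choose_eq_zero_of_lt hk])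
  exact ⟨x⟩

theorem nonempty_of_mem (h : FHPk F k) (hk : 2 ≤ k) {A : Set X} (hA : A ∈ F) : A.Nonempty := by
  obtain ⟨β, hβ0, hβ⟩ := h 1 one_pos
  obtain ⟨J, hJ, x, hx⟩ :=
    hβ 1 (fun _ => A) (fun _ => hA) (by simp [Nat.choose_eq_zero_of_lt hk])
  have hJ1 : (0 : ℝ) < #J := hβ0.trans_le (by simpa using hJ)
  obtain ⟨j, hj⟩ := card_pos.1 (by exact_mod_cast hJ1)
  exact ⟨x, Set.mem_iInter₂.1 hx j hj⟩

end FHPk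

open Classical in
noncomputable def consFinset {ι : Type*} [Fintype ι] (S : ι → Set X) (k : ℕ) :
    Finset (Finset ι) :=
  (powersetCard k univ).filter fun J => (⋂ i ∈ J, S i).Nonempty

@[simp]
theorem mem_consFinset {ι : Type*} [Fintype ι] {S : ι → Set X} {k : ℕ} {J : Finset ι} :
    J ∈ consFinset S k ↔ #J = k ∧ (⋂ i ∈ J, S i).Nonempty := by
  simp [consFinset]

theorem consCount_eq_card_consFinset {n : ℕ} (S : Fin n → Set X) (k : ℕ) :
    consCount S k = #(consFinset S k) := by
  rw [consCount, ← Set.ncard_coe_finset]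
  congr 1
  ext J
  simp

theorem exists_subset_nonempty_iInter_of_nonempty_iInter_iUnion {ι κ : Type*} [Fintype κ]
    (g : ι → κ → Set X) (k : κ → ℕ) {J : Finset ι} (hJ : ∑ i, k i < #J + Fintype.card κ)
    (hne : (⋂ j ∈ J, ⋃ i, g j i).Nonempty) :
    ∃ i, ∃ J' ⊆ J, #J' = k i ∧ (⋂ j ∈ J', g j i).Nonempty := by
  classical
  obtain ⟨x, hx⟩ := hne
  set A : κ → Finset ι := fun i => J.filter fun j => x ∈ g j i
  have hJA : #J ≤ ∑ i, #(A i) := by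
    refine (card_le_card fun j hj => ?_).trans card_biUnion_le
    obtain ⟨i, hi⟩ := Set.mem_iUnion.1 (Set.mem_iInter₂.1 hx j hj)
    exact mem_biUnion.2 ⟨i, mem_univ _, mem_filter.2 ⟨hj, hi⟩⟩
  obtain ⟨i, -, hi⟩ : ∃ i ∈ univ, k i < #(A i) + 1 := by
    refine exists_lt_of_sum_lt ?_
    rw [sum_add_distrib, sum_const, card_univ, smul_eq_mul, mul_one]
    omega
  obtain ⟨J', hJ'A, hJ'⟩ := exists_subset_card_eq (Nat.lt_succ_iff.1 hi)
  exact ⟨i, J', hJ'A.trans (filter_subset _ _), hJ',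
    x, Set.mem_iInter₂.2 fun j hj => (mem_filter.1 (hJ'A hj)).2⟩

theorem card_le_sum_card_mul_choose {ι κ : Type*} [Fintype ι] [DecidableEq ι] [Fintype κ]
    {C : Finset (Finset ι)} {D : κ → Finset (Finset ι)} {k : κ → ℕ} {m : ℕ}
    (hC : ∀ J ∈ C, #J = m ∧ ∃ i, ∃ J' ∈ D i, J' ⊆ J) (hD : ∀ i, ∀ J' ∈ D i, #J' = k i) :
    #C ≤ ∑ i with k i ≤ m, #(D i) * (Fintype.card ι - k i).choose (m - k i) := by
  calc #C ≤ #((univ.filter fun i => k i ≤ m).biUnion fun i =>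
        (D i).biUnion fun J' => (powersetCard (m - k i) J'ᶜ).image (J' ∪ ·)) := by
        refine card_le_card fun J hJ => ?_
        obtain ⟨hJm, i, J', hJ'D, hJ'J⟩ := hC J hJ
        have hki : k i ≤ m := hD i J' hJ'D ▸ hJm ▸ card_le_card hJ'J
        refine mem_biUnion.2 ⟨i, mem_filter.2 ⟨mem_univ _, hki⟩, mem_biUnion.2 ⟨J', hJ'D, ?_⟩⟩
        refine mem_image.2 ⟨J \ J', mem_powersetCard.2 ⟨?_, ?_⟩, union_sdiff_of_subset hJ'J⟩
        · exact fun j hj => mem_compl.2 (mem_sdiff.1 hj).2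
        · rw [card_sdiff_of_subset hJ'J, hJm, hD i J' hJ'D]
    _ ≤ ∑ i with k i ≤ m, #(D i) * (Fintype.card ι - k i).choose (m - k i) := by
        refine card_biUnion_le.trans (sum_le_sum fun i _ => card_biUnion_le_card_mul _ _ _ ?_)
        intro J' hJ'
        calc _ ≤ #(powersetCard (m - k i) J'ᶜ) := card_image_le
          _ = _ := by rw [card_powersetCard, card_compl, hD i J' hJ']

theorem consCount_iUnion_le {κ : Type*} [Fintype κ] {n : ℕ} (g : Fin n → κ → Set X)
    (k : κ → ℕ) {m : ℕ} (hm : ∑ i, k i < m + Fintype.card κ) :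
    consCount (fun j => ⋃ i, g j i) m ≤
      ∑ i with k i ≤ m, consCount (fun j => g j i) (k i) * (n - k i).choose (m - k i) := by
  classical
  simp only [consCount_eq_card_consFinset]
  have hC : ∀ J ∈ consFinset (fun j => ⋃ i, g j i) m,
      #J = m ∧ ∃ i, ∃ J' ∈ consFinset (fun j => g j i) (k i), J' ⊆ J := by
    intro J hJ
    obtain ⟨hJm, hJne⟩ := mem_consFinset.1 hJ
    obtain ⟨i, J', hJ'J, hJ', hJ'ne⟩ :=
      exists_subset_nonempty_iInter_of_nonempty_iInter_iUnion g k (hJm ▸ hm) hJne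
    exact ⟨hJm, i, J', mem_consFinset.2 ⟨hJ', hJ'ne⟩, hJ'J⟩
  simpa only [Fintype.card_fin] using card_le_sum_card_mul_choose hC
    fun i J' hJ' => (mem_consFinset.1 hJ').1

/-- The constant uses `C(m, kᵢ) ≤ 2 ^ m`; the `+ 1` leaves room for a strict inequality. -/
theorem exists_le_mul_choose_of_le_sum {κ : Type*} [Fintype κ] {N m : ℕ} (hm : m ≤ N)
    {k : κ → ℕ} {d : κ → ℝ} {α : ℝ} (hα : 0 < α)
    (h : α * N.choose m ≤ ∑ i with k i ≤ m, d i * (N - k i).choose (m - k i)) :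
    ∃ i, α / (2 ^ m * (Fintype.card κ + 1)) * N.choose (k i) ≤ d i := by
  by_contra! hd
  set K : ℝ := (Fintype.card κ : ℝ)
  have hK : K + 1 ≠ 0 := by positivity
  have hterm : ∀ i ∈ univ.filter fun i => k i ≤ m,
      d i * (N - k i).choose (m - k i) ≤ α / (K + 1) * N.choose m := by
    intro i hi
    have hchoose : (N.choose (k i) * (N - k i).choose (m - k i) : ℝ) =
        N.choose m * m.choose (k i) := by
      exact_mod_cast (Nat.choose_mul (mem_filter.1 hi).2).symm
    have h2 : (m.choose (k i) : ℝ) ≤ 2 ^ m := by exact_mod_cast Nat.choose_le_two_pow m (k i)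
    calc d i * (N - k i).choose (m - k i)
        ≤ α / (2 ^ m * (K + 1)) * N.choose (k i) * (N - k i).choose (m - k i) := by
          gcongr; exact (hd i).le
      _ = α / (2 ^ m * (K + 1)) * N.choose m * m.choose (k i) := by
          rw [mul_assoc, hchoose, mul_assoc]
      _ ≤ α / (2 ^ m * (K + 1)) * N.choose m * 2 ^ m := by gcongr
      _ = α / (K + 1) * N.choose m := by field_simp
  have hcard : (#(univ.filter fun i => k i ≤ m) : ℝ) ≤ K := Nat.cast_le.2 (card_le_univ _)
  have hpos : 0 < α / (K + 1) * N.choose m := by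
    have := Nat.choose_pos hm
    positivity
  have hsum := h.trans (sum_le_card_nsmul _ _ _ hterm)
  rw [nsmul_eq_mul] at hsum
  have : (#(univ.filter fun i => k i ≤ m) : ℝ) * (α / (K + 1) * N.choose m) < α * N.choose m :=
    calc _ ≤ K * (α / (K + 1) * N.choose m) := by gcongr
      _ < (K + 1) * (α / (K + 1) * N.choose m) := by gcongr; linarith
      _ = α * N.choose m := by field_simp
  linarith

theorem exists_pos_le_and_forall_le {κ : Type*} [Finite κ] {c : ℝ} (hc : 0 < c) {b : κ → ℝ}
    (hb : ∀ i, 0 < b i) : ∃ β, 0 < β ∧ β ≤ c ∧ ∀ i, β ≤ b i := by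
  have hev : ∀ᶠ β in 𝓝[>] (0 : ℝ), (β ≤ c ∧ ∀ i, β ≤ b i) ∧ β ∈ Set.Ioi 0 :=
    (Eventually.filter_mono nhdsWithin_le_nhds
      ((eventually_le_nhds hc).and (eventually_all.2 fun i => eventually_le_nhds (hb i)))).and
      eventually_mem_nhdsWithin
  obtain ⟨β, ⟨hβc, hβb⟩, hβ⟩ := hev.exists
  exact ⟨β, hβ, hβc, hβb⟩

theorem exists_nonempty_iInter_iUnion_of_lt {t n : ℕ} (ht : 1 ≤ t) {F : Fin t → Set (Set X)}
    {k : Fin t → ℕ} (hF : ∀ i, FHPk (F i) (k i)) {g : Fin n → Fin t → Set X}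
    (hg : ∀ j i, g j i ∈ F i) (hn : n < ∑ i, k i + 1 - t) {β : ℝ} (hβ : β * n ≤ 1) :
    ∃ J : Finset (Fin n), β * n ≤ #J ∧ (⋂ j ∈ J, ⋃ i, g j i).Nonempty := by
  rcases n.eq_zero_or_pos with rfl | hn0
  · obtain ⟨i, -, hi⟩ : ∃ i ∈ univ, 0 < k i := exists_lt_of_sum_lt (by simp; omega)
    have := (hF i).nonempty hi
    exact ⟨∅, by simp, by simp⟩
  · obtain ⟨i, -, hi⟩ : ∃ i ∈ univ, 1 < k i := exists_lt_of_sum_lt (by simp; omega)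
    exact ⟨{⟨0, hn0⟩}, by simpa using hβ,
      by simpa using ((hF i).nonempty_of_mem hi (hg _ i)).mono (Set.subset_iUnion _ i)⟩

end

/-- Let `X` be a set, `t ≥ 1`, and for each `i ∈ {1,…,t}` let `𝓕_i` be a family of subsets
of `X` satisfying `FHP_{k_i}`. Then the family `{ S_1 ∪ ⋯ ∪ S_t : S_i ∈ 𝓕_i }` satisfies
`FHP_k` for `k := (k_1 + ⋯ + k_t) − t + 1`. -/
theorem fhp_union_closure {X : Type*} (t : ℕ) (ht : 1 ≤ t)
    (F : Fin t → Set (Set X)) (k : Fin t → ℕ)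
    (hF : ∀ i, FHPk (F i) (k i)) :
    FHPk {T : Set X | ∃ S : Fin t → Set X, (∀ i, S i ∈ F i) ∧ T = ⋃ i, S i}
      ((∑ i, k i) + 1 - t) := by
  intro α hα
  set m := (∑ i, k i) + 1 - t
  have hα' : 0 < α / (2 ^ m * (Fintype.card (Fin t) + 1)) := by positivity
  choose β hβ hFβ using fun i => hF i _ hα'
  -- `β₀ ≤ (m + 1)⁻¹` handles tuples shorter than `m`, for which the hypothesis is vacuous.
  obtain ⟨β₀, hβ₀, hβ₀m, hβ₀β⟩ := exists_pos_le_and_forall_le (c := ((m : ℝ) + 1)⁻¹) (by positivity) hβ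
  refine ⟨β₀, hβ₀, fun n S hS hcons => ?_⟩
  choose g hgF hgS using hS
  obtain rfl : S = fun j => ⋃ i, g j i := funext hgS
  rcases lt_or_ge n m with hn | hn
  · refine exists_nonempty_iInter_iUnion_of_lt ht hF hgF hn ?_
    calc β₀ * n ≤ ((m : ℝ) + 1)⁻¹ * (m + 1) := by gcongr; exact_mod_cast hn.le.trans m.le_succ
      _ = 1 := inv_mul_cancel₀ (by positivity)
  · have hsum : ∑ i, k i < m + Fintype.card (Fin t) := by simp only [Fintype.card_fin]; omega
    obtain ⟨i, hi⟩ := exists_le_mul_choose_of_le_sum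
      (d := fun i => (consCount (fun j => g j i) (k i) : ℝ)) hn hα
      (hcons.trans (by exact_mod_cast consCount_iUnion_le g k hsum))
    obtain ⟨J, hJ, hJne⟩ := hFβ i n (fun j => g j i) (fun j => hgF j i) hi
    exact ⟨J, (mul_le_mul_of_nonneg_right (hβ₀β i) n.cast_nonneg).trans hJ,
      hJne.mono (Set.iInter₂_mono fun j _ => Set.subset_iUnion _ i)⟩
end

section
/- For each k ∈ ℕ there exists a real γ > 0 (depending only on k) such that: for every set X, every n ∈ ℕ, and every tuple (S_1, …, S_n) of k-element subsets of X (repetitions allowed), there exist pairwise disjoint subsets X_1, …, X_k of X and a set I ⊆ {1,…,n} with |I| ≥ γ·n such that |S_i ∩ X_j| = 1 for every i ∈ I and every j ∈ {1,…,k}. -/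
/-!
Colour the (finite) union of the `S i` with `k` colours uniformly at random and let `Xs j` be the
`j`-th colour class. A fixed `k`-set receives `k` distinct colours with probability `k! / k ^ k`,
so by averaging some colouring is injective on at least `k! / k ^ k · n` of the `S i`, and each of
those meets every colour class exactly once.
-/

open Finset Function Nat

theorem Nat.card_subtype_injOn {α β : Type*} [Finite α] [Finite β] (s : Set α) :
    Nat.card {c : α → β // Set.InjOn c s} =
      (Nat.card β).descFactorial s.ncard * Nat.card β ^ (Nat.card α - s.ncard) := by
  classical
  have := Fintype.ofFinite α
  have := Fintype.ofFinite β
  let e : {c : α → β // Set.InjOn c s} ≃ (s ↪ β) × ({a // a ∉ s} → β) :=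
    ((Equiv.piEquivPiSubtypeProd (· ∈ s) fun _ => β).subtypeEquiv
      (p := fun c => Set.InjOn c s) (q := fun fg => Injective fg.1)
      fun c => Set.injOn_iff_injective).trans
    (Equiv.prodSubtypeFstEquivSubtypeProd.trans
      ((Equiv.subtypeInjectiveEquivEmbedding s β).prodCongr (Equiv.refl _)))
  have hemb : Nat.card (s ↪ β) = (Nat.card β).descFactorial s.ncard := by
    rw [Nat.card_eq_fintype_card, Fintype.card_embedding_eq, ← Nat.card_eq_fintype_card,
      ← Nat.card_eq_fintype_card]
    rfl
  rw [Nat.card_congr e, Nat.card_prod, Nat.card_fun, hemb, ← Set.ncard_compl s]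
  rfl

theorem exists_card_mul_le_card_filter {ι C : Type*} [Fintype ι] [Fintype C] [Nonempty C]
    (r : ι → C → Prop) [∀ i c, Decidable (r i c)] {m : ℕ}
    (hm : ∀ i, m ≤ #{c | r i c}) :
    ∃ c, Fintype.card ι * m ≤ Fintype.card C * #{i | r i c} := by
  by_contra! h
  refine lt_irrefl (Fintype.card C * (Fintype.card ι * m)) ?_
  calc Fintype.card C * (Fintype.card ι * m)
      ≤ Fintype.card C * ∑ i, #{c | r i c} := by
        gcongr
        simpa using card_nsmul_le_sum univ _ m fun i _ => hm i
    _ = ∑ c, Fintype.card C * #{i | r i c} := by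
        rw [← mul_sum]; congr 1; exact sum_card_bipartiteAbove_eq_sum_card_bipartiteBelow r
    _ < ∑ _c : C, Fintype.card ι * m := sum_lt_sum_of_nonempty univ_nonempty fun c _ => h c
    _ = Fintype.card C * (Fintype.card ι * m) := by simp

theorem Set.ncard_inter_preimage_singleton_eq_one {X β : Type*} [Finite β] {c : X → β}
    {s : Set X} (hcard : s.ncard = Nat.card β) (hc : Set.InjOn c s) (b : β) :
    (s ∩ c ⁻¹' {b}).ncard = 1 := by
  have hsurj : c '' s = Set.univ :=
    Set.eq_of_subset_of_ncard_le (Set.subset_univ _)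
      (by rw [Set.ncard_univ, hc.ncard_image, hcard])
  obtain ⟨x, hx, rfl⟩ : b ∈ c '' s := hsurj ▸ Set.mem_univ b
  refine Set.ncard_eq_one.2 ⟨x, Set.ext fun y => ⟨fun hy => hc hy.1 hx hy.2, ?_⟩⟩
  rintro rfl
  exact ⟨hx, rfl⟩

open Classical in
theorem exists_injOn_card_mul_le_of_finite {ι α β : Type*} [Fintype ι] [Finite α] [Finite β]
    [Nonempty β] (S : ι → Set α) (hS : ∀ i, (S i).ncard = Nat.card β) :
    ∃ c : α → β, (Nat.card β)! * Fintype.card ι ≤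
      Nat.card β ^ Nat.card β * #{i | Set.InjOn c (S i)} := by
  have := Fintype.ofFinite (α → β)
  set k := Nat.card β
  set a := Nat.card α
  have hk : 0 < k := Nat.card_pos
  obtain ⟨c, hc⟩ := exists_card_mul_le_card_filter (fun i (c : α → β) => Set.InjOn c (S i))
    (m := k ! * k ^ (a - k)) fun i => by
      rw [← Fintype.card_subtype, ← Nat.card_eq_fintype_card, Nat.card_subtype_injOn, hS i,
        Nat.descFactorial_self]
  refine ⟨c, Nat.le_of_mul_le_mul_right ?_ (pow_pos hk (a - k))⟩
  calc k ! * Fintype.card ι * k ^ (a - k) = Fintype.card ι * (k ! * k ^ (a - k)) := by ring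
    _ ≤ k ^ a * #{i | Set.InjOn c (S i)} := by
        simpa only [Fintype.card_eq_nat_card, Nat.card_fun] using hc
    -- `k ≤ a` fails when `ι` is empty, and then `a - k` truncates to `0`
    _ ≤ k ^ (k + (a - k)) * #{i | Set.InjOn c (S i)} :=
        Nat.mul_le_mul_right _ (Nat.pow_le_pow_right hk le_add_tsub)
    _ = k ^ k * #{i | Set.InjOn c (S i)} * k ^ (a - k) := by ring

open Classical in
theorem exists_injOn_card_mul_le {ι X β : Type*} [Fintype ι] [Finite β] [Nonempty β]
    (S : ι → Set X) (hS : ∀ i, (S i).Finite ∧ (S i).ncard = Nat.card β) :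
    ∃ c : X → β, (Nat.card β)! * Fintype.card ι ≤
      Nat.card β ^ Nat.card β * #{i | Set.InjOn c (S i)} := by
  let U := ⋃ i, S i
  have : Finite U := (Set.finite_iUnion fun i => (hS i).1).to_subtype
  have hSU : ∀ i, S i ⊆ Set.range ((↑) : U → X) := fun i => by
    rw [Subtype.range_coe]; exact Set.subset_iUnion S i
  obtain ⟨c, hc⟩ := exists_injOn_card_mul_le_of_finite (fun i => ((↑) : U → X) ⁻¹' S i)
    fun i => by
      rw [Set.ncard_preimage_of_injective_subset_range Subtype.val_injective (hSU i), (hS i).2]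
  let c' := extend ((↑) : U → X) c fun _ => Classical.arbitrary β
  refine ⟨c', hc.trans (Nat.mul_le_mul_left _ (card_le_card (monotone_filter_right _ ?_)))⟩
  intro i _ hi
  rw [← extend_comp Subtype.val_injective c (fun _ => Classical.arbitrary β)] at hi
  simpa only [Set.image_preimage_eq_of_subset (hSU i)] using hi.image_of_comp

/-- (Füredi's sunflower-type lemma, multiset version.) For each `k ∈ ℕ` there exists a real
`γ > 0` (depending only on `k`) such that: for every set `X`, every `n ∈ ℕ`, and every
tuple `(S_1, …, S_n)` of `k`-element subsets of `X` (repetitions allowed), there exist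
pairwise disjoint subsets `X_1, …, X_k` of `X` and a set `I ⊆ {1,…,n}` with `|I| ≥ γ·n`
such that `|S_i ∩ X_j| = 1` for every `i ∈ I` and every `j ∈ {1,…,k}`. -/
theorem furedi_with_repetitions (k : ℕ) :
    ∃ γ : ℝ, 0 < γ ∧
      ∀ (X : Type*) (n : ℕ) (S : Fin n → Set X),
        (∀ i, (S i).Finite ∧ (S i).ncard = k) →
        ∃ (Xs : Fin k → Set X) (I : Finset (Fin n)),
          (∀ j j' : Fin k, j ≠ j' → Disjoint (Xs j) (Xs j')) ∧
          γ * (n : ℝ) ≤ (I.card : ℝ) ∧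
          ∀ i ∈ I, ∀ j : Fin k, (S i ∩ Xs j).ncard = 1 := by
  classical
  rcases k.eq_zero_or_pos with rfl | hk
  · exact ⟨1, one_pos, fun X n S _ =>
      ⟨Fin.elim0, univ, fun j => j.elim0, by simp, fun _ _ j => j.elim0⟩⟩
  refine ⟨k ! / k ^ k, by positivity, fun X n S hS => ?_⟩
  have : NeZero k := ⟨hk.ne'⟩
  obtain ⟨c, hc⟩ := exists_injOn_card_mul_le (β := Fin k) S (by simpa using hS)
  refine ⟨fun j => c ⁻¹' {j}, ({i | Set.InjOn c (S i)} : Finset (Fin n)),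
    fun j j' hj => ?_, ?_, fun i hi j => ?_⟩
  · exact Disjoint.preimage c (Set.disjoint_singleton.2 hj)
  · rw [Nat.card_fin, Fintype.card_fin] at hc
    rw [div_mul_eq_mul_div, div_le_iff₀ (by positivity), mul_comm (#_ : ℝ)]
    exact_mod_cast hc
  · exact Set.ncard_inter_preimage_singleton_eq_one (by simp [(hS i).2]) (mem_filter.1 hi).2 j
end

section
/- Let X be a set, let k, d, m ≥ 1 be integers, and let S_{i,j} ⊆ X for (i,j) ∈ {1,…,k} × {1,…,m} be such that: (i) for every function f : {1,…,k} → {1,…,m}, ⋂_{i=1}^{k} S_{i,f(i)} ≠ ∅; and (ii) for every i ∈ {1,…,k} and every d-element subset J of {1,…,m}, ⋂_{j∈J} S_{i,j} = ∅. Set n := k·m. Then the number of k-element subsets T of {1,…,k} × {1,…,m} with ⋂_{(i,j)∈T} S_{i,j} ≠ ∅ is at least (1/k^k)·binom(n,k), while every subset T of {1,…,k} × {1,…,m} with ⋂_{(i,j)∈T} S_{i,j} ≠ ∅ satisfies |T| ≤ (d−1)·k. -/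
/-! Each transversal `f` gives the `k`-set `{(i, f i)}` with non-empty intersection, and distinct
transversals give distinct sets, so there are at least `m ^ k ≥ binom(k m, k) / k ^ k` such sets.
Conversely, a point of `⋂_{(i,j) ∈ T} S_{i,j}` lies in fewer than `d` sets of each row, so `T`
meets each of the `k` rows in at most `d - 1` cells. -/

section

open Finset

variable {X ι κ : Type*}

def transversal [Fintype ι] (f : ι → κ) : Finset (ι × κ) :=
  univ.map ⟨fun i => (i, f i), fun _ _ h => (Prod.mk.inj h).1⟩

theorem card_transversal [Fintype ι] (f : ι → κ) : #(transversal f) = Fintype.card ι :=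
  card_map _

theorem mem_transversal [Fintype ι] {f : ι → κ} {p : ι × κ} : p ∈ transversal f ↔ f p.1 = p.2 := by
  simp only [transversal, mem_map, mem_univ, true_and]
  constructor
  · rintro ⟨i, rfl⟩
    rfl
  · exact fun h => ⟨p.1, Prod.ext rfl h⟩

theorem transversal_injective [Fintype ι] :
    Function.Injective (transversal : (ι → κ) → Finset (ι × κ)) := fun f g h =>
  funext fun i => by
    have hi : (i, f i) ∈ transversal g := h ▸ mem_transversal.2 rfl
    exact (mem_transversal.1 hi).symm

theorem biInter_transversal [Fintype ι] (S : ι → κ → Set X) (f : ι → κ) :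
    ⋂ p ∈ transversal f, S p.1 p.2 = ⋂ i, S i (f i) := by
  ext x
  simp only [Set.mem_iInter, mem_transversal]
  exact ⟨fun h i => h (i, f i) rfl, fun h ⟨i, _⟩ hj => hj ▸ h i⟩

theorem card_pow_le_ncard_of_transversals [Fintype ι] [Fintype κ] (S : ι → κ → Set X)
    (h : ∀ f : ι → κ, (⋂ i, S i (f i)).Nonempty) :
    Fintype.card κ ^ Fintype.card ι ≤
      {T : Finset (ι × κ) | #T = Fintype.card ι ∧ (⋂ p ∈ T, S p.1 p.2).Nonempty}.ncard := by
  classical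
  rw [← Fintype.card_fun, ← Nat.card_eq_fintype_card, ← Set.ncard_univ]
  refine Set.ncard_le_ncard_of_injOn transversal (fun f _ => ?_) transversal_injective.injOn
  exact ⟨card_transversal f, biInter_transversal S f ▸ h f⟩

open scoped Classical in
theorem card_filter_mem_lt [Fintype κ] {S : ι → κ → Set X} {d : ℕ}
    (h : ∀ i J, #J = d → ⋂ j ∈ J, S i j = ∅) (i : ι) (x : X) :
    #{j | x ∈ S i j} < d := by
  by_contra! hd
  obtain ⟨J, hJ, rfl⟩ := exists_subset_card_eq hd
  have hx : x ∈ ⋂ j ∈ J, S i j := Set.mem_iInter₂.2 fun j hj => (mem_filter.1 (hJ hj)).2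
  exact (h i J rfl ▸ hx : x ∈ (∅ : Set X))

open scoped Classical in
theorem card_le_of_biInter_nonempty [Fintype ι] [Fintype κ] {S : ι → κ → Set X} {d : ℕ}
    (h : ∀ i J, #J = d → ⋂ j ∈ J, S i j = ∅) {T : Finset (ι × κ)}
    (hT : (⋂ p ∈ T, S p.1 p.2).Nonempty) : #T ≤ (d - 1) * Fintype.card ι := by
  obtain ⟨x, hx⟩ := hT
  have hxT : ∀ p ∈ T, x ∈ S p.1 p.2 := fun p hp => Set.mem_iInter₂.1 hx p hp
  refine card_le_mul_card_image_of_maps_to (f := Prod.fst) (t := univ)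
    (fun _ _ => mem_univ _) _ fun i _ => ?_
  have hrow : #{p ∈ T | p.1 = i} ≤ #{j | x ∈ S i j} := by
    refine card_le_card_of_injOn Prod.snd (fun p hp => ?_) fun p hp q hq hpq => ?_
    · obtain ⟨hpT, rfl⟩ := mem_filter.1 hp
      exact mem_filter.2 ⟨mem_univ _, hxT p hpT⟩
    · exact Prod.ext ((mem_filter.1 hp).2.trans (mem_filter.1 hq).2.symm) hpq
  have := card_filter_mem_lt h i x
  omega

end

theorem one_div_pow_self_mul_choose_le (k m : ℕ) :
    1 / (k : ℝ) ^ k * ((k * m).choose k : ℝ) ≤ (m : ℝ) ^ k := by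
  have hchoose : ((k * m).choose k : ℝ) ≤ (k : ℝ) ^ k * (m : ℝ) ^ k := by
    rw [← mul_pow]
    exact_mod_cast Nat.choose_le_pow (k * m) k
  have hk : (0 : ℝ) < (k : ℝ) ^ k := by
    rcases k.eq_zero_or_pos with rfl | hk
    · simp
    · positivity
  rw [one_div_mul_eq_div, div_le_iff₀ hk]
  linarith

theorem tp2_array_counting_general {X : Type*} (k d m : ℕ)
    (S : Fin k → Fin m → Set X)
    (h1 : ∀ f : Fin k → Fin m, (⋂ i, S i (f i)).Nonempty)
    (h2 : ∀ i : Fin k, ∀ J : Finset (Fin m), J.card = d → ⋂ j ∈ J, S i j = ∅) :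
    (1 / (k : ℝ) ^ k) * ((k * m).choose k : ℝ) ≤
      ({T : Finset (Fin k × Fin m) | T.card = k ∧
        (⋂ p ∈ T, S p.1 p.2).Nonempty}.ncard : ℝ) ∧
    ∀ T : Finset (Fin k × Fin m), (⋂ p ∈ T, S p.1 p.2).Nonempty → T.card ≤ (d - 1) * k := by
  refine ⟨(one_div_pow_self_mul_choose_le k m).trans ?_, fun T hT => ?_⟩
  · have := card_pow_le_ncard_of_transversals S h1
    simp only [Fintype.card_fin] at this
    exact_mod_cast this
  · simpa using card_le_of_biInter_nonempty h2 hT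

/-- (Combinatorial core of "FHP implies NTP₂".) Let `X` be a set, `k, d, m ≥ 1` integers,
and `S_{i,j} ⊆ X` for `(i,j) ∈ {1,…,k} × {1,…,m}` such that every transversal (one set per
row) has non-empty intersection while any `d` sets from a single row have empty
intersection. Set `n := k·m`. Then the number of `k`-element subsets `T` of
`{1,…,k} × {1,…,m}` with `⋂_{(i,j)∈T} S_{i,j} ≠ ∅` is at least `(1/k^k)·binom(n,k)`,
while every subset `T` with `⋂_{(i,j)∈T} S_{i,j} ≠ ∅` satisfies `|T| ≤ (d−1)·k`. -/
theorem tp2_array_counting {X : Type*} (k d m : ℕ) (hk : 1 ≤ k) (hd : 1 ≤ d) (hm : 1 ≤ m)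
    (S : Fin k → Fin m → Set X)
    (h1 : ∀ f : Fin k → Fin m, (⋂ i, S i (f i)).Nonempty)
    (h2 : ∀ i : Fin k, ∀ J : Finset (Fin m), J.card = d → ⋂ j ∈ J, S i j = ∅) :
    (1 / (k : ℝ) ^ k) * ((k * m).choose k : ℝ) ≤
      ({T : Finset (Fin k × Fin m) | T.card = k ∧
        (⋂ p ∈ T, S p.1 p.2).Nonempty}.ncard : ℝ) ∧
    ∀ T : Finset (Fin k × Fin m), (⋂ p ∈ T, S p.1 p.2).Nonempty → T.card ≤ (d - 1) * k :=
  tp2_array_counting_general k d m S h1 h2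
end

section
/- Let (X, μ) and (Y, ν) be probability spaces, d ≥ 1 an integer, and α > 0 a real. Let E ⊆ X × Y be measurable with respect to the product σ-algebra, with (μ ⊗ ν)(E) ≥ α. Let Γ := { (x, y_1, …, y_d) ∈ X × Y^d : (x, y_i) ∈ E for all i ∈ {1,…,d} }. Then (μ ⊗ ν^{⊗d})(Γ) ≥ α^d, where ν^{⊗d} is the d-fold product of ν with itself on Y^d. -/
open MeasureTheory
open scoped ENNReal

/-!
Write `f x := ν(E_x)` for the fibre measure. By Tonelli, `(μ ⊗ ν)(E) = ∫ f dμ`, and since the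
fibre of `Γ` over `x` is the box `E_x^d`, also `(μ ⊗ ν^{⊗d})(Γ) = ∫ f^d dμ`. Hölder's inequality
against the constant `1` on the probability space `(X, μ)` gives `(∫ f dμ)^d ≤ ∫ f^d dμ`.
-/

theorem ENNReal.pow_lintegral_le_lintegral_pow {α : Type*} [MeasurableSpace α] {μ : Measure α}
    [IsProbabilityMeasure μ] {f : α → ℝ≥0∞} (hf : AEMeasurable f μ) (n : ℕ) :
    (∫⁻ x, f x ∂μ) ^ n ≤ ∫⁻ x, f x ^ n ∂μ := by
  rcases n.eq_zero_or_pos with rfl | hn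
  · simp
  have hn' : (n : ℝ) ≠ 0 := by positivity
  have hn_inv_le : (n : ℝ)⁻¹ ≤ 1 := inv_le_one_of_one_le₀ (by exact_mod_cast hn)
  have holder := ENNReal.lintegral_mul_norm_pow_le (μ := μ) (hf.pow_const n)
    (aemeasurable_const (b := (1 : ℝ≥0∞))) (p := (n : ℝ)⁻¹) (q := 1 - (n : ℝ)⁻¹)
    (by positivity) (by linarith) (by ring)
  simp only [ENNReal.one_rpow, mul_one, lintegral_one, measure_univ, ← ENNReal.rpow_natCast,
    ← ENNReal.rpow_mul, mul_inv_cancel₀ hn', ENNReal.rpow_one] at holder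
  calc (∫⁻ x, f x ∂μ) ^ n ≤ ((∫⁻ x, f x ^ n ∂μ) ^ (n : ℝ)⁻¹) ^ n := by
        gcongr
        simpa only [ENNReal.rpow_natCast] using holder
    _ = ∫⁻ x, f x ^ n ∂μ := by
        rw [← ENNReal.rpow_natCast, ← ENNReal.rpow_mul, inv_mul_cancel₀ hn', ENNReal.rpow_one]

section FibrePower

variable {X Y ι : Type*} [MeasurableSpace X] [MeasurableSpace Y] {E : Set (X × Y)}

theorem measurableSet_setOf_forall_fibre_mem [Countable ι] (hE : MeasurableSet E) :
    MeasurableSet {p : X × (ι → Y) | ∀ i, (p.1, p.2 i) ∈ E} := by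
  simp only [Set.ofPred_forall]
  exact .iInter fun i =>
    hE.preimage (measurable_fst.prodMk ((measurable_pi_apply i).comp measurable_snd))

theorem prod_pi_setOf_forall_fibre_mem [Fintype ι] (μ : Measure X) (ν : Measure Y) [SigmaFinite ν]
    (hE : MeasurableSet E) :
    μ.prod (Measure.pi fun _ : ι => ν) {p : X × (ι → Y) | ∀ i, (p.1, p.2 i) ∈ E} =
      ∫⁻ x, ν (Prod.mk x ⁻¹' E) ^ Fintype.card ι ∂μ := by
  rw [Measure.prod_apply (measurableSet_setOf_forall_fibre_mem hE)]
  refine lintegral_congr fun x => ?_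
  have box : Prod.mk x ⁻¹' {p : X × (ι → Y) | ∀ i, (p.1, p.2 i) ∈ E} =
      Set.univ.pi fun _ => Prod.mk x ⁻¹' E := by
    ext y
    simp [Set.mem_pi]
  rw [box, Measure.pi_pi, Finset.prod_const, Finset.card_univ]

end FibrePower

theorem holder_fibre_power_general {X Y : Type*} [MeasurableSpace X] [MeasurableSpace Y]
    (μ : Measure X) (ν : Measure Y) [IsProbabilityMeasure μ] [IsProbabilityMeasure ν]
    (d : ℕ) (α : ℝ) (hα : 0 < α)
    (E : Set (X × Y)) (hE : MeasurableSet E)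
    (hEα : ENNReal.ofReal α ≤ μ.prod ν E) :
    ENNReal.ofReal (α ^ d) ≤
      μ.prod (Measure.pi fun _ : Fin d => ν)
        {p : X × (Fin d → Y) | ∀ i : Fin d, (p.1, p.2 i) ∈ E} := by
  calc ENNReal.ofReal (α ^ d) = ENNReal.ofReal α ^ d := ENNReal.ofReal_pow hα.le d
    _ ≤ (μ.prod ν E) ^ d := by gcongr
    _ = (∫⁻ x, ν (Prod.mk x ⁻¹' E) ∂μ) ^ d := by rw [Measure.prod_apply hE]
    _ ≤ ∫⁻ x, ν (Prod.mk x ⁻¹' E) ^ d ∂μ :=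
      ENNReal.pow_lintegral_le_lintegral_pow (measurable_measure_prodMk_left hE).aemeasurable d
    _ = _ := by rw [prod_pi_setOf_forall_fibre_mem μ ν hE, Fintype.card_fin]

/-- (Hölder claim.) Let `(X, μ)` and `(Y, ν)` be probability spaces, `d ≥ 1`, and `α > 0`.
Let `E ⊆ X × Y` be measurable for the product σ-algebra with `(μ ⊗ ν)(E) ≥ α`, and let
`Γ := {(x, y_1, …, y_d) : (x, y_i) ∈ E for all i}`. Then `(μ ⊗ ν^{⊗d})(Γ) ≥ α^d`. -/
theorem holder_fibre_power {X Y : Type*} [MeasurableSpace X] [MeasurableSpace Y]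
    (μ : Measure X) (ν : Measure Y) [IsProbabilityMeasure μ] [IsProbabilityMeasure ν]
    (d : ℕ) (hd : 1 ≤ d) (α : ℝ) (hα : 0 < α)
    (E : Set (X × Y)) (hE : MeasurableSet E)
    (hEα : ENNReal.ofReal α ≤ μ.prod ν E) :
    ENNReal.ofReal (α ^ d) ≤
      μ.prod (Measure.pi fun _ : Fin d => ν)
        {p : X × (Fin d → Y) | ∀ i : Fin d, (p.1, p.2 i) ∈ E} :=
  holder_fibre_power_general μ ν d α hα E hE hEα
end

section
/- Let X and Y be sets and let E ⊆ X × Y be a relation such that for every m ∈ ℕ there exists a set S ⊆ Y with |S| = m that is dually shattered by E, i.e., for every S' ⊆ S there is e ∈ X such that for all c ∈ S: (e, c) ∈ E if and only if c ∈ S'. For b_1, b_2 ∈ Y set D(b_1, b_2) := { x ∈ X : (x, b_1) ∈ E and (x, b_2) ∉ E }. Then for every integer q ≥ 2 there exists p ≥ q such that for every N ∈ ℕ there is a finite family 𝓓' of sets of the form D(b_1, b_2) with b_1 ≠ b_2 ∈ Y which satisfies the (p, q)-property but admits no transversal of size at most N. -/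
/-!
Take a set `S ⊆ Y` of size `2 ^ N + 1` dually shattered by `E` and the family of all
`D(y, z)` with `y ≠ z` in `S`.

A set `A` of at most `N` points cannot pierce it: the traces `{a ∈ A : (a, y) ∈ E}` of
the `2 ^ N + 1` points `y ∈ S` take at most `2 ^ N` values, so two points `y ≠ z` have
the same trace, and then no `a ∈ A` lies in `D(y, z)`.

The family has the `(p, q)`-property for `p = q (2q - 1)`. Among any `p` of the pairs one
can choose `q` in which no first coordinate is a second coordinate: either `q` of them share
their first (or their second) coordinate, or each pair conflicts with at most `2q - 2`
others and a greedy independent set of the conflict graph has size `q`. Dual shattering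
gives a point `e` with `(e, y) ∈ E` exactly for the chosen first coordinates `y` of `S`,
and `e` lies in all `q` sets.
-/

def Dset {X Y : Type*} (E : Set (X × Y)) (b₁ b₂ : Y) : Set X :=
  {x | (x, b₁) ∈ E ∧ (x, b₂) ∉ E}

open Finset

namespace SimpleGraph

variable {V : Type*} [Fintype V] [DecidableEq V] (G : SimpleGraph V) [DecidableRel G.Adj]

theorem exists_isNIndepSet_subset_of_degree_le {d : ℕ} (hd : ∀ v, G.degree v ≤ d) (t : ℕ) :
    ∀ T : Finset V, t * (d + 1) ≤ #T → ∃ s ⊆ T, G.IsNIndepSet t s := by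
  induction t with
  | zero => exact fun T _ => ⟨∅, empty_subset _, by simp [isNIndepSet_iff]⟩
  | succ t ih =>
    intro T hT
    obtain ⟨v, hv⟩ : T.Nonempty := card_pos.1 (lt_of_lt_of_le (by positivity) hT)
    let B := insert v (G.neighborFinset v)
    have hB : #B ≤ d + 1 := (card_insert_le _ _).trans (by simpa using hd v)
    obtain ⟨s, hsT, hs⟩ := ih (T \ B) (by have := le_card_sdiff B T; rw [add_one_mul] at hT; omega)
    have hvs : ∀ w ∈ s, Gᶜ.Adj v w := fun w hw => by
      have hwB := (mem_sdiff.1 (hsT hw)).2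
      simp only [B, mem_insert, mem_neighborFinset, not_or] at hwB
      exact (compl_adj G v w).2 ⟨Ne.symm hwB.1, hwB.2⟩
    refine ⟨insert v s, insert_subset hv (hsT.trans sdiff_subset), ?_⟩
    exact (G.isNClique_compl).1 (((G.isNClique_compl).2 hs).insert hvs)

end SimpleGraph

theorem exists_card_eq_forall_fst_ne_snd {ι α : Type*} [Fintype ι] (u : ι → α × α)
    (hu : ∀ k, (u k).1 ≠ (u k).2) {q : ℕ} (hq : q * (2 * q - 1) ≤ Fintype.card ι) :
    ∃ I : Finset ι, #I = q ∧ ∀ k ∈ I, ∀ l ∈ I, (u k).1 ≠ (u l).2 := by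
  classical
  let fibFst (v : α) : Finset ι := {k | (u k).1 = v}
  let fibSnd (v : α) : Finset ι := {k | (u k).2 = v}
  by_cases hfst : ∃ v, q ≤ #(fibFst v)
  · obtain ⟨v, hv⟩ := hfst
    obtain ⟨I, hIv, hI⟩ := exists_subset_card_eq hv
    refine ⟨I, hI, fun k hk l hl => ?_⟩
    simpa [(mem_filter.1 (hIv hk)).2, (mem_filter.1 (hIv hl)).2] using hu l
  by_cases hsnd : ∃ v, q ≤ #(fibSnd v)
  · obtain ⟨v, hv⟩ := hsnd
    obtain ⟨I, hIv, hI⟩ := exists_subset_card_eq hv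
    refine ⟨I, hI, fun k hk l hl => ?_⟩
    simpa [(mem_filter.1 (hIv hk)).2, (mem_filter.1 (hIv hl)).2] using hu k
  push Not at hfst hsnd
  let G := SimpleGraph.fromRel fun k l => (u k).1 = (u l).2
  have hdeg : ∀ k, G.degree k ≤ 2 * q - 2 := by
    intro k
    have hnbr : G.neighborFinset k ⊆ fibSnd (u k).1 ∪ fibFst (u k).2 := by
      intro l hl
      simp only [G, SimpleGraph.mem_neighborFinset, SimpleGraph.fromRel_adj] at hl
      simp only [fibFst, fibSnd, mem_union, mem_filter, mem_univ, true_and]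
      exact hl.2.imp Eq.symm id
    calc G.degree k ≤ #(fibSnd (u k).1 ∪ fibFst (u k).2) := card_le_card hnbr
      _ ≤ #(fibSnd (u k).1) + #(fibFst (u k).2) := card_union_le _ _
      _ ≤ 2 * q - 2 := by have := hsnd (u k).1; have := hfst (u k).2; omega
  have hcard : q * (2 * q - 2 + 1) ≤ #(univ : Finset ι) := by
    rcases Nat.eq_zero_or_pos q with rfl | hq0
    · simp
    · rwa [show 2 * q - 2 + 1 = 2 * q - 1 by omega, card_univ]
  obtain ⟨I, -, hI⟩ := G.exists_isNIndepSet_subset_of_degree_le hdeg q univ hcard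
  refine ⟨I, hI.card_eq, fun k hk l hl hkl => ?_⟩
  rcases eq_or_ne k l with rfl | hne
  · exact hu k hkl
  · exact hI.isIndepSet hk hl hne (by simp [G, hne, hkl])

section DualShattering

variable {X Y : Type*}

def DuallyShatters (E : Set (X × Y)) (S : Finset Y) : Prop :=
  ∀ S' ⊆ S, ∃ e : X, ∀ c ∈ S, ((e, c) ∈ E ↔ c ∈ S')

theorem DuallyShatters.nonempty_iInter_Dset {E : Set (X × Y)} {S : Finset Y}
    (hS : DuallyShatters E S) {ι : Type*} (u : ι → Y × Y) (I : Finset ι)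
    (huS : ∀ k ∈ I, (u k).1 ∈ S ∧ (u k).2 ∈ S) (hI : ∀ k ∈ I, ∀ l ∈ I, (u k).1 ≠ (u l).2) :
    (⋂ k ∈ I, Dset E (u k).1 (u k).2).Nonempty := by
  classical
  obtain ⟨e, he⟩ := hS (I.image fun k => (u k).1)
    (image_subset_iff.2 fun k hk => (huS k hk).1)
  refine ⟨e, Set.mem_iInter₂.2 fun k hk => ⟨?_, fun hE => ?_⟩⟩
  · exact (he _ (huS k hk).1).2 (mem_image_of_mem _ hk)
  · obtain ⟨l, hl, hlk⟩ := mem_image.1 ((he _ (huS k hk).2).1 hE)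
    exact hI l hl k hk hlk

theorem exists_mem_offDiag_forall_notMem_Dset (E : Set (X × Y)) {S : Finset Y}
    {A : Finset X} (hSA : 2 ^ #A < #S) :
    ∃ y ∈ S.offDiag, ∀ a ∈ A, a ∉ Dset E y.1 y.2 := by
  classical
  let trace : Y → Finset X := fun y => {a ∈ A | (a, y) ∈ E}
  obtain ⟨y, hy, z, hz, hyz, htrace⟩ := exists_ne_map_eq_of_card_lt_of_maps_to
    (t := A.powerset) (by rwa [card_powerset]) (f := trace)
    fun y _ => mem_powerset.2 (filter_subset _ _)
  refine ⟨(y, z), mem_offDiag.2 ⟨hy, hz, hyz⟩, fun a ha haD => haD.2 ?_⟩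
  have hay : a ∈ trace y := mem_filter.2 ⟨ha, haD.1⟩
  rw [htrace] at hay
  exact (mem_filter.1 hay).2

end DualShattering

/-- (IP implies not pierceable.) Let `E ⊆ X × Y` be a relation such that for every `m`
there is a set `S ⊆ Y` of size `m` dually shattered by `E`. Then for every `q ≥ 2` there
exists `p ≥ q` such that for every `N` there is a finite family of sets of the form
`D(b₁, b₂) = {x : (x,b₁) ∈ E ∧ (x,b₂) ∉ E}` with `b₁ ≠ b₂` which satisfies the
`(p, q)`-property but admits no transversal of size at most `N`. -/
theorem ip_not_pierceable {X Y : Type*} (E : Set (X × Y))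
    (hIP : ∀ m : ℕ, ∃ S : Finset Y, S.card = m ∧
      ∀ S' ⊆ S, ∃ e : X, ∀ c ∈ S, ((e, c) ∈ E ↔ c ∈ S')) :
    ∀ q : ℕ, 2 ≤ q → ∃ p : ℕ, q ≤ p ∧
      ∀ N : ℕ, ∃ (n : ℕ) (b : Fin n → Y × Y),
        (∀ i, (b i).1 ≠ (b i).2) ∧
        (∀ g : Fin p → Fin n, ∃ I : Finset (Fin p), I.card = q ∧
          (⋂ i ∈ I, Dset E (b (g i)).1 (b (g i)).2).Nonempty) ∧
        (∀ A : Finset X, A.card ≤ N →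
          ∃ i : Fin n, ∀ a ∈ A, a ∉ Dset E (b i).1 (b i).2) := by
  classical
  intro q hq
  refine ⟨q * (2 * q - 1), Nat.le_mul_of_pos_right q (by omega), fun N => ?_⟩
  obtain ⟨S, hcard, hS⟩ : ∃ S : Finset Y, #S = 2 ^ N + 1 ∧ DuallyShatters E S := hIP _
  let b : Fin #S.offDiag → Y × Y := fun i => S.offDiag.equivFin.symm i
  have hb : ∀ i, (b i).1 ∈ S ∧ (b i).2 ∈ S ∧ (b i).1 ≠ (b i).2 := fun i =>
    mem_offDiag.1 (S.offDiag.equivFin.symm i).2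
  refine ⟨_, b, fun i => (hb i).2.2, fun g => ?_, fun A hA => ?_⟩
  · obtain ⟨I, hIq, hI⟩ := exists_card_eq_forall_fst_ne_snd (b ∘ g)
      (fun k => (hb (g k)).2.2) (q := q) (by simp)
    exact ⟨I, hIq,
      hS.nonempty_iInter_Dset (b ∘ g) I (fun k _ => ⟨(hb (g k)).1, (hb (g k)).2.1⟩) hI⟩
  · have hSA : 2 ^ #A < #S := by
      have := Nat.pow_le_pow_right two_pos hA
      omega
    obtain ⟨y, hy, hyA⟩ := exists_mem_offDiag_forall_notMem_Dset E hSA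
    exact ⟨S.offDiag.equivFin ⟨y, hy⟩, by simpa [b] using hyA⟩
end

section
/- There exists a family (B_{i,j})_{i,j∈ℕ} of convex subsets of ℝ² such that, writing D for the closed unit disk in ℝ² and setting F_{i,j} := D ∖ B_{i,j}, the following hold: (a) for every i ∈ ℕ and all j ≠ j' ∈ ℕ, F_{i,j} ∩ F_{i,j'} = ∅; and (b) for every function f : ℕ → ℕ and every n ∈ ℕ, ⋂_{i<n} F_{i,f(i)} ≠ ∅. -/
/-!
Enumerate the finite sequences of naturals injectively by points of the unit circle, and let
`F i j` be the set of those points whose sequence has `j` in position `i`. Each row is pairwise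
disjoint by injectivity, and the point coding `(f 0, …, f (n - 1))` lies in `F i (f i)` for all
`i < n`. Since the closed disk is strictly convex, removing any set of boundary points leaves it
convex, so `B i j := D \ F i j` is convex and `D \ B i j = F i j`.
-/

open Metric Set

section Extreme

variable {𝕜 E : Type*} [Semiring 𝕜] [PartialOrder 𝕜] [AddCommGroup E] [Module 𝕜 E]

theorem isExtreme_of_subset_extremePoints {A B : Set E} (hB : B ⊆ A.extremePoints 𝕜) :
    IsExtreme 𝕜 A B :=
  ⟨hB.trans extremePoints_subset, fun _ h₁ _ h₂ _ hx hseg ↦ (hB hx).2 h₁ h₂ hseg ▸ hx⟩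

theorem StrictConvex.convex_sdiff [IsOrderedRing 𝕜] [TopologicalSpace E] {C S : Set E}
    (hC : StrictConvex 𝕜 C) (hS : S ⊆ C \ interior C) : Convex 𝕜 (C \ S) :=
  (isExtreme_of_subset_extremePoints (hS.trans hC.sdiff_interior_subset_extremePoints)).convex_sdiff
    hC.convex

end Extreme

section Sphere

variable {E : Type*} [NormedAddCommGroup E] [NormedSpace ℝ E]

theorem convex_closedBall_sdiff_of_subset_sphere [StrictConvexSpace ℝ E] [Nontrivial E]
    {x : E} {r : ℝ} {S : Set E} (hS : S ⊆ sphere x r) : Convex ℝ (closedBall x r \ S) :=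
  (strictConvex_closedBall ℝ x r).convex_sdiff <| by
    rwa [interior_closedBall', closedBall_sdiff_ball]

theorem infinite_sphere (h : 1 < Module.rank ℝ E) (x : E) {r : ℝ} (hr : 0 < r) :
    (sphere x r).Infinite := by
  have : Nontrivial E := rank_pos_iff_nontrivial.1 (zero_lt_one.trans h)
  obtain ⟨y, hy⟩ := (NormedSpace.sphere_nonempty (x := x)).2 hr.le
  refine (isPreconnected_sphere h x r).infinite_of_nontrivial ⟨y, hy, x - (y - x), ?_, ?_⟩
  · simpa [dist_eq_norm, norm_sub_rev] using hy
  · intro hyx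
    have : (2 : ℝ) • (y - x) = 0 := by rw [two_smul]; nth_rewrite 2 [hyx]; abel
    obtain rfl : y = x := by simpa [sub_eq_zero] using this
    exact hr.ne (by simpa using hy)

end Sphere

theorem Set.Infinite.exists_injective_of_countable {α X : Type*} [Countable α] {s : Set X}
    (hs : s.Infinite) : ∃ e : α → X, Function.Injective e ∧ range e ⊆ s := by
  obtain ⟨g, hg⟩ := Countable.exists_injective_nat α
  exact ⟨(↑) ∘ hs.natEmbedding s ∘ g,
    Subtype.val_injective.comp ((hs.natEmbedding s).injective.comp hg),
    range_subset_iff.2 fun _ ↦ Subtype.prop _⟩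

section DigitFiber

variable {X : Type*}

def digitFiber (e : List ℕ → X) (i j : ℕ) : Set X :=
  e '' {l | l.getD i 0 = j}

theorem disjoint_digitFiber {e : List ℕ → X} (he : Function.Injective e) (i : ℕ) {j j' : ℕ}
    (h : j ≠ j') : Disjoint (digitFiber e i j) (digitFiber e i j') :=
  (disjoint_image_iff he).2 <| disjoint_left.2 fun _ h₁ h₂ ↦ h (h₁.symm.trans h₂)

theorem nonempty_biInter_digitFiber (e : List ℕ → X) (f : ℕ → ℕ) (n : ℕ) :
    (⋂ i ∈ Finset.range n, digitFiber e i (f i)).Nonempty :=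
  ⟨e (List.ofFn fun i : Fin n ↦ f i), mem_iInter₂.2 fun _ hi ↦ ⟨_, by simp_all, rfl⟩⟩

end DigitFiber

/-- There exists a family `(B_{i,j})_{i,j∈ℕ}` of convex subsets of `ℝ²` such that, writing
`D` for the closed unit disk and `F_{i,j} := D ∖ B_{i,j}`: (a) for every `i` and all
`j ≠ j'`, `F_{i,j} ∩ F_{i,j'} = ∅`; and (b) for every `f : ℕ → ℕ` and every `n`,
`⋂_{i<n} F_{i,f(i)} ≠ ∅`. (This witnesses `2-TP₂` for differences of convex sets.) -/
theorem convex_differences_tp2 :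
    ∃ B : ℕ → ℕ → Set (EuclideanSpace ℝ (Fin 2)),
      (∀ i j, Convex ℝ (B i j)) ∧
      (∀ i : ℕ, ∀ j j' : ℕ, j ≠ j' →
        (Metric.closedBall (0 : EuclideanSpace ℝ (Fin 2)) 1 \ B i j) ∩
          (Metric.closedBall (0 : EuclideanSpace ℝ (Fin 2)) 1 \ B i j') = ∅) ∧
      (∀ f : ℕ → ℕ, ∀ n : ℕ,
        (⋂ i ∈ Finset.range n,
          (Metric.closedBall (0 : EuclideanSpace ℝ (Fin 2)) 1 \ B i (f i))).Nonempty) := by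
  have hrank : 1 < Module.rank ℝ (EuclideanSpace ℝ (Fin 2)) := by
    rw [← Module.finrank_eq_rank, finrank_euclideanSpace_fin]; norm_num
  obtain ⟨e, he, hsphere⟩ :=
    (infinite_sphere hrank 0 one_pos).exists_injective_of_countable (α := List ℕ)
  have hF (i j : ℕ) : digitFiber e i j ⊆ sphere 0 1 := (image_subset_range _ _).trans hsphere
  have hDF (i j : ℕ) : closedBall 0 1 \ (closedBall 0 1 \ digitFiber e i j) = digitFiber e i j :=
    sdiff_sdiff_cancel_left ((hF i j).trans sphere_subset_closedBall)
  refine ⟨fun i j ↦ closedBall 0 1 \ digitFiber e i j,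
    fun i j ↦ convex_closedBall_sdiff_of_subset_sphere (hF i j), fun i j j' h ↦ ?_, fun f n ↦ ?_⟩
  · simpa only [hDF] using (disjoint_digitFiber he i h).inter_eq
  · simpa only [hDF] using nonempty_biInter_digitFiber e f n
end

section
/- Let d ≥ 2 and k ≥ d be integers. There exists L ∈ ℕ (depending only on k and d) such that for every l ≥ L the following holds. Let X be a set, A a set with |A| = l, and (S_a)_{a∈A} a family of subsets of X. Call a set P ⊆ A with 1 ≤ |P| ≤ k consistent if ⋂_{a∈P} S_a ≠ ∅, and call two sets P, Q ⊆ A 1-inconsistent if there exist a ∈ P and b ∈ Q with S_a ∩ S_b = ∅. Suppose 𝒮 is a collection of consistent subsets of A, each of size at most k, which are pairwise 1-inconsistent, and |𝒮| > 2 · l^{k − 1/d^{d−1}} (real exponent). Then there exist elements a_{i,j} ∈ A for i, j ∈ {1,…,d} such that: for each i, the sets S_{a_{i,1}}, …, S_{a_{i,d}} are pairwise disjoint; and for every function f : {1,…,d} → {1,…,d}, ⋂_{i=1}^{d} S_{a_{i,f(i)}} ≠ ∅. -/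
/-!
Erdős's bound: an `(r+2)`-uniform hypergraph on `n ≥ t²` vertices that contains no complete
`(r+2)`-partite hypergraph with parts of size `t` has at most `(3/2) n^(r+2 - 1/t^(r+1))` edges.
By induction on `r`: the common link of a `t`-set is box-free of smaller uniformity, and since
`∑_f (deg f choose t) = ∑_T |link T|`, Jensen's inequality for the degrees of the `(r+1)`-sets
bounds the sum of the degrees, hence the number of edges.

If a `d`-uniform family of consistent, pairwise 1-inconsistent sets contains such a box with
parts of size `d`, enumerating its parts gives the grid: two transversals that differ only in
row `i` are distinct members, and the witnesses of their inconsistency can only be their entries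
in row `i`. So without a grid there are `O(l^(d - ε))` such `d`-sets. Deleting an element `a` from
the members containing it keeps the family pairwise 1-inconsistent, and summing over `a` gives by
induction on the maximal size `|𝒮| ≤ l^(k-d) (3/2) l^(d-ε) + k l^(k-1) ≤ 2 l^(k-ε)` once `l ≥ 4k²`.
-/

open Finset

lemma le_rpow_one_sub_of_sq_le {c N ε : ℝ} (hN : 1 ≤ N) (hcN : c ^ 2 ≤ N) (hε : ε ≤ 1 / 2) :
    c ≤ N ^ (1 - ε) :=
  calc c ≤ |c| := le_abs_self c
    _ ≤ √N := Real.abs_le_sqrt hcN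
    _ = N ^ (1 / 2 : ℝ) := Real.sqrt_eq_rpow N
    _ ≤ N ^ (1 - ε) := Real.rpow_le_rpow_of_exponent_le hN (by linarith)

lemma one_div_pow_le_half {t n : ℕ} (ht : 2 ≤ t) (hn : n ≠ 0) : 1 / (t : ℝ) ^ n ≤ 1 / 2 := by
  have ht' : (2 : ℝ) ≤ t := by exact_mod_cast ht
  gcongr
  exact ht'.trans (le_self_pow₀ (by linarith) hn)

lemma mul_pow_le_rpow {N : ℝ} {r t : ℕ} (ht : 2 ≤ t) (hN : (t : ℝ) ^ 2 ≤ N) :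
    (t : ℝ) * N ^ (r + 1) ≤ N ^ ((r + 2 : ℝ) - 1 / (t : ℝ) ^ (r + 1)) := by
  have ht' : (2 : ℝ) ≤ t := by exact_mod_cast ht
  have hN1 : 1 ≤ N := by nlinarith
  have hsplit : N ^ ((r + 2 : ℝ) - 1 / (t : ℝ) ^ (r + 1))
      = N ^ (1 - 1 / (t : ℝ) ^ (r + 1)) * N ^ (r + 1) := by
    rw [← Real.rpow_natCast N (r + 1), ← Real.rpow_add (by positivity)]
    congr 1
    push_cast
    ring
  rw [hsplit]
  gcongr
  exact le_rpow_one_sub_of_sq_le hN1 hN (one_div_pow_le_half ht (by omega))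

lemma pow_mul_add_le_two_mul_rpow {N ε : ℝ} {d j : ℕ} (hd : 1 ≤ d) (hN1 : 1 ≤ N)
    (hN : 4 * ((d + j : ℕ) : ℝ) ^ 2 ≤ N) (hε : ε ≤ 1 / 2) :
    N ^ j * (3 / 2 * N ^ ((d : ℝ) - ε)) + ((d + j : ℕ) : ℝ) * N ^ (d + j - 1)
      ≤ 2 * N ^ (((d + j : ℕ) : ℝ) - ε) := by
  have hN0 : 0 < N := by linarith
  have hmerge : N ^ j * N ^ ((d : ℝ) - ε) = N ^ (((d + j : ℕ) : ℝ) - ε) := by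
    rw [← Real.rpow_natCast, ← Real.rpow_add hN0]
    congr 1
    push_cast
    ring
  have hsplit : N ^ (((d + j : ℕ) : ℝ) - ε) = N ^ (d + j - 1) * N ^ (1 - ε) := by
    rw [← Real.rpow_natCast, ← Real.rpow_add hN0]
    congr 1
    rw [Nat.cast_sub (by omega)]
    push_cast
    ring
  have hlarge : 2 * ((d + j : ℕ) : ℝ) ≤ N ^ (1 - ε) :=
    le_rpow_one_sub_of_sq_le hN1 (by linarith) hε
  calc N ^ j * (3 / 2 * N ^ ((d : ℝ) - ε)) + ((d + j : ℕ) : ℝ) * N ^ (d + j - 1)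
      = 3 / 2 * N ^ (((d + j : ℕ) : ℝ) - ε) + ((d + j : ℕ) : ℝ) * N ^ (d + j - 1) := by
        rw [← hmerge]
        ring
    _ ≤ 3 / 2 * N ^ (((d + j : ℕ) : ℝ) - ε) + N ^ (1 - ε) / 2 * N ^ (d + j - 1) := by
        gcongr
        linarith
    _ = 2 * N ^ (((d + j : ℕ) : ℝ) - ε) := by
        rw [hsplit]
        ring

section Hypergraph

variable {V : Type*} [DecidableEq V]

/-- `E` contains a copy of the complete `r`-partite hypergraph `K^{(r)}(t, …, t)`. -/
def HasBox (E : Finset (Finset V)) (r t : ℕ) : Prop :=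
  ∃ W : Fin r → Finset V, (∀ i, #(W i) = t) ∧ (∀ i j, i ≠ j → Disjoint (W i) (W j)) ∧
    ∀ w : Fin r → V, (∀ i, w i ∈ W i) → univ.image w ∈ E

lemma card_lt_of_not_hasBox_one {E : Finset (Finset V)} {t : ℕ} (hE : ∀ e ∈ E, #e = 1)
    (hbox : ¬ HasBox E 1 t) : #E < t := by
  by_contra! htE
  have hsingleton : ∀ e ∈ E, ∃ v, e = {v} := fun e he => card_eq_one.mp (hE e he)
  set U := E.biUnion id
  have hU : ∀ v ∈ U, {v} ∈ E := by
    intro v hv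
    obtain ⟨e, he, hve⟩ := mem_biUnion.mp hv
    obtain ⟨a, rfl⟩ := hsingleton e he
    rwa [mem_singleton.mp hve]
  have hEU : #E ≤ #U := by
    refine (card_le_card fun e he => ?_).trans (card_image_le (f := singleton))
    obtain ⟨a, rfl⟩ := hsingleton e he
    exact mem_image_of_mem _ (mem_biUnion.mpr ⟨{a}, he, mem_singleton_self a⟩)
  obtain ⟨W, hWU, hWt⟩ := exists_subset_card_eq (htE.trans hEU)
  refine hbox ⟨fun _ => W, fun _ => hWt, fun i j hij => absurd (Subsingleton.elim i j) hij,
    fun w hw => ?_⟩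
  rw [univ_unique, image_singleton]
  exact hU _ (hWU (hw default))

variable [Fintype V]

def edgeDegree (E : Finset (Finset V)) (f : Finset V) : ℕ :=
  #{v | v ∉ f ∧ insert v f ∈ E}

def commonLink (E : Finset (Finset V)) (r : ℕ) (T : Finset V) : Finset (Finset V) :=
  {f ∈ univ.powersetCard r | ∀ v ∈ T, v ∉ f ∧ insert v f ∈ E}

lemma card_mul_le_sum_edgeDegree {E : Finset (Finset V)} {r : ℕ} (hE : ∀ e ∈ E, #e = r + 1) :
    (r + 1) * #E ≤ ∑ f ∈ univ.powersetCard r, edgeDegree E f := by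
  have hflags : #(E.sigma fun e => e) = (r + 1) * #E := by
    rw [card_sigma, sum_congr rfl hE, sum_const, smul_eq_mul, mul_comm]
  have hpairs : #((univ.powersetCard r).sigma fun f => ({v | v ∉ f ∧ insert v f ∈ E} : Finset V))
      = ∑ f ∈ univ.powersetCard r, edgeDegree E f :=
    card_sigma _ _
  rw [← hflags, ← hpairs]
  refine card_le_card_of_injOn (fun p => ⟨p.1.erase p.2, p.2⟩) ?_ ?_
  · rintro ⟨e, x⟩ hp
    simp only [coe_sigma, Set.mem_sigma_iff, mem_coe] at hp
    simp only [coe_sigma, Set.mem_sigma_iff, mem_coe, mem_powersetCard, subset_univ, true_and,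
      mem_filter, mem_univ, notMem_erase, not_false_eq_true, insert_erase hp.2, hp.1, and_true]
    rw [card_erase_of_mem hp.2, hE e hp.1, Nat.add_sub_cancel]
  · rintro ⟨e, x⟩ hp ⟨e', x'⟩ hp' h
    simp only [Sigma.mk.inj_iff, heq_eq_eq] at h
    obtain ⟨he, rfl⟩ := h
    simp only [coe_sigma, Set.mem_sigma_iff, mem_coe] at hp hp'
    rw [← insert_erase hp.2, ← insert_erase hp'.2, he]

lemma sum_choose_edgeDegree (E : Finset (Finset V)) (r t : ℕ) :
    ∑ f ∈ univ.powersetCard r, (edgeDegree E f).choose t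
      = ∑ T ∈ univ.powersetCard t, #(commonLink E r T) := by
  have hchoose : ∀ f : Finset V, (edgeDegree E f).choose t
      = #{T ∈ univ.powersetCard t | ∀ v ∈ T, v ∉ f ∧ insert v f ∈ E} := by
    intro f
    rw [edgeDegree, ← card_powersetCard]
    congr 1
    ext T
    simp [subset_iff, and_comm]
  simp_rw [commonLink, hchoose, card_filter]
  exact sum_comm

lemma hasBox_of_hasBox_commonLink {E : Finset (Finset V)} {r t : ℕ} (ht : 1 ≤ t)
    {T : Finset V} (hT : #T = t) (hbox : HasBox (commonLink E (r + 1) T) (r + 1) t) :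
    HasBox E (r + 2) t := by
  obtain ⟨W, hWc, hWd, hWt⟩ := hbox
  have hWT : ∀ i, Disjoint (W i) T := by
    intro i
    refine disjoint_left.mpr fun x hx hxT => ?_
    have hne : ∀ j, (W j).Nonempty := fun j => card_pos.mp (by rw [hWc j]; omega)
    let w : Fin (r + 1) → V := Function.update (fun j => (hne j).choose) i x
    have hw : ∀ j, w j ∈ W j := by
      intro j
      rcases eq_or_ne j i with rfl | hj
      · simpa [w] using hx
      · simpa [w, hj] using (hne j).choose_spec
    have hlink := (mem_filter.mp (hWt w hw)).2 x hxT
    exact hlink.1 (mem_image.mpr ⟨i, mem_univ i, by simp [w]⟩)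
  refine ⟨Fin.snoc W T, fun i => ?_, fun i j hij => ?_, fun w hw => ?_⟩
  · induction i using Fin.lastCases <;> simp [hT, hWc]
  · induction i using Fin.lastCases <;> induction j using Fin.lastCases
    · exact absurd rfl hij
    · simpa using (hWT _).symm
    · simpa using hWT _
    · simpa using hWd _ _ (fun h => hij (by rw [h]))
  · have hlast : w (Fin.last (r + 1)) ∈ T := by simpa using hw (Fin.last (r + 1))
    have hinit := hWt (fun j => w j.castSucc) fun j => by simpa using hw j.castSucc
    have himage : univ.image w = insert (w (Fin.last (r + 1)))
        (univ.image fun j : Fin (r + 1) => w j.castSucc) := by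
      rw [Fin.univ_castSuccEmb, cons_eq_insert, image_insert, map_eq_image, image_image]
      rfl
    rw [himage]
    exact ((mem_filter.mp hinit).2 _ hlast).2

lemma sum_tsub_pow_edgeDegree_le (E : Finset (Finset V)) (r t : ℕ) :
    ∑ f ∈ univ.powersetCard r, (edgeDegree E f - t) ^ t
      ≤ t.factorial * ∑ T ∈ univ.powersetCard t, #(commonLink E r T) := by
  rw [← sum_choose_edgeDegree, mul_sum]
  gcongr with f
  rw [← Nat.descFactorial_eq_factorial_mul_choose]
  exact (Nat.pow_le_pow_left (by omega) t).trans (Nat.pow_sub_le_descFactorial _ t)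

lemma sum_pow_tsub_edgeDegree_le {E : Finset (Finset V)} {r t : ℕ} {c : ℝ} (hc : 0 ≤ c)
    (hlink : ∀ T ∈ univ.powersetCard t, (#(commonLink E r T) : ℝ) ≤ c) :
    ∑ f ∈ univ.powersetCard r, ((edgeDegree E f - t : ℕ) : ℝ) ^ t
      ≤ (Fintype.card V : ℝ) ^ t * c :=
  calc ∑ f ∈ univ.powersetCard r, ((edgeDegree E f - t : ℕ) : ℝ) ^ t
      ≤ t.factorial * ∑ T ∈ univ.powersetCard t, (#(commonLink E r T) : ℝ) := by
        exact_mod_cast sum_tsub_pow_edgeDegree_le E r t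
    _ ≤ t.factorial * ∑ _T ∈ univ.powersetCard t, c := by gcongr with T hT; exact hlink T hT
    _ = ((t.factorial * (Fintype.card V).choose t : ℕ) : ℝ) * c := by
        rw [sum_const, card_powersetCard, card_univ, nsmul_eq_mul]
        push_cast
        ring
    _ ≤ (Fintype.card V : ℝ) ^ t * c := by
        gcongr
        rw [← Nat.descFactorial_eq_factorial_mul_choose]
        exact_mod_cast Nat.descFactorial_le_pow _ _

lemma sum_tsub_edgeDegree_lt {E : Finset (Finset V)} {r t : ℕ} (ht : 2 ≤ t)
    (hV : 1 ≤ Fintype.card V)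
    (hlink : ∀ T ∈ univ.powersetCard t, (#(commonLink E (r + 1) T) : ℝ)
      ≤ t * (Fintype.card V : ℝ) ^ ((r + 1 : ℝ) - 1 / (t : ℝ) ^ r)) :
    ∑ f ∈ univ.powersetCard (r + 1), ((edgeDegree E f - t : ℕ) : ℝ)
      < 2 * (Fintype.card V : ℝ) ^ ((r + 2 : ℝ) - 1 / (t : ℝ) ^ (r + 1)) := by
  set N : ℝ := (Fintype.card V : ℝ) with hN_def
  have hN : 0 < N := by rw [hN_def]; exact_mod_cast hV
  obtain ⟨s, rfl⟩ : ∃ s, t = s + 1 := ⟨t - 1, by omega⟩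
  set β : ℝ := (r + 1 : ℝ) - 1 / ((s + 1 : ℕ) : ℝ) ^ r
  set α : ℝ := (r + 2 : ℝ) - 1 / ((s + 1 : ℕ) : ℝ) ^ (r + 1)
  set x : Finset V → ℝ := fun f => ((edgeDegree E f - (s + 1) : ℕ) : ℝ)
  have hjensen : (∑ f ∈ univ.powersetCard (r + 1), x f) ^ (s + 1)
      ≤ (N ^ (r + 1)) ^ s * ∑ f ∈ univ.powersetCard (r + 1), x f ^ (s + 1) := by
    refine (pow_sum_le_card_mul_sum_pow (fun f _ => by positivity) s).trans ?_
    gcongr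
    rw [card_powersetCard, card_univ, hN_def]
    exact_mod_cast Nat.choose_le_pow _ _
  -- `(r + 1) (t - 1) + t + β = t α`: this is where the exponent `α` comes from.
  have hexponent : (N ^ (r + 1)) ^ s * (N ^ (s + 1) * N ^ β) = (N ^ α) ^ (s + 1) := by
    simp only [← Real.rpow_natCast, ← Real.rpow_mul hN.le, ← Real.rpow_add hN]
    congr 1
    simp only [α, β]
    push_cast
    field_simp
    ring
  have htwo : ((s + 1 : ℕ) : ℝ) < 2 ^ (s + 1) := by exact_mod_cast Nat.lt_two_pow_self
  refine lt_of_pow_lt_pow_left₀ (s + 1) (by positivity) ?_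
  calc (∑ f ∈ univ.powersetCard (r + 1), x f) ^ (s + 1)
      ≤ (N ^ (r + 1)) ^ s * ∑ f ∈ univ.powersetCard (r + 1), x f ^ (s + 1) := hjensen
    _ ≤ (N ^ (r + 1)) ^ s * (N ^ (s + 1) * ((s + 1 : ℕ) * N ^ β)) := by
        gcongr
        exact sum_pow_tsub_edgeDegree_le (by positivity) hlink
    _ = (s + 1 : ℕ) * (N ^ α) ^ (s + 1) := by rw [← hexponent]; ring
    _ < 2 ^ (s + 1) * (N ^ α) ^ (s + 1) := by gcongr
    _ = (2 * N ^ α) ^ (s + 1) := (mul_pow _ _ _).symm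

lemma card_of_mem_commonLink {E : Finset (Finset V)} {r : ℕ} {T f : Finset V}
    (hf : f ∈ commonLink E r T) : #f = r :=
  (mem_powersetCard.mp (mem_filter.mp hf).1).2

lemma card_le_of_card_commonLink_le {E : Finset (Finset V)} {r t : ℕ} (ht : 2 ≤ t)
    (hV : t ^ 2 ≤ Fintype.card V) (hE : ∀ e ∈ E, #e = r + 2)
    (hlink : ∀ T ∈ univ.powersetCard t, (#(commonLink E (r + 1) T) : ℝ)
      ≤ t * (Fintype.card V : ℝ) ^ ((r + 1 : ℝ) - 1 / (t : ℝ) ^ r)) :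
    (#E : ℝ) ≤ 3 / 2 * (Fintype.card V : ℝ) ^ ((r + 2 : ℝ) - 1 / (t : ℝ) ^ (r + 1)) := by
  set N : ℝ := (Fintype.card V : ℝ) with hN_def
  set α : ℝ := (r + 2 : ℝ) - 1 / (t : ℝ) ^ (r + 1)
  set Pr : Finset (Finset V) := univ.powersetCard (r + 1)
  have hdegree : (r + 2) * #E ≤ ∑ f ∈ Pr, (edgeDegree E f - t) + #Pr * t :=
    calc (r + 2) * #E ≤ ∑ f ∈ Pr, edgeDegree E f := card_mul_le_sum_edgeDegree hE
      _ ≤ ∑ f ∈ Pr, (edgeDegree E f - t + t) := sum_le_sum fun f _ => le_tsub_add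
      _ = _ := by rw [sum_add_distrib, sum_const, smul_eq_mul]
  have hPr : (#Pr : ℝ) ≤ N ^ (r + 1) := by
    rw [card_powersetCard, card_univ, hN_def]
    exact_mod_cast Nat.choose_le_pow _ _
  have hcount : ((r : ℝ) + 2) * #E < 3 * N ^ α :=
    calc ((r : ℝ) + 2) * #E ≤ ∑ f ∈ Pr, ((edgeDegree E f - t : ℕ) : ℝ) + #Pr * t := by
          exact_mod_cast hdegree
      _ ≤ ∑ f ∈ Pr, ((edgeDegree E f - t : ℕ) : ℝ) + t * N ^ (r + 1) := by
          rw [mul_comm (#Pr : ℝ)]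
          gcongr
      _ < 2 * N ^ α + N ^ α := add_lt_add_of_lt_of_le
          (sum_tsub_edgeDegree_lt ht ((Nat.one_le_pow _ _ (by omega)).trans hV) hlink)
          (mul_pow_le_rpow ht (by rw [hN_def]; exact_mod_cast hV))
      _ = 3 * N ^ α := by ring
  have hr : (2 : ℝ) * #E ≤ ((r : ℝ) + 2) * #E := by
    gcongr
    exact le_add_of_nonneg_left r.cast_nonneg
  linarith

theorem card_le_of_not_hasBox {E : Finset (Finset V)} {r t : ℕ} (ht : 2 ≤ t)
    (hV : t ^ 2 ≤ Fintype.card V) (hE : ∀ e ∈ E, #e = r + 2) (hbox : ¬ HasBox E (r + 2) t) :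
    (#E : ℝ) ≤ 3 / 2 * (Fintype.card V : ℝ) ^ ((r + 2 : ℝ) - 1 / (t : ℝ) ^ (r + 1)) := by
  induction r generalizing E with
  | zero =>
    refine card_le_of_card_commonLink_le ht hV hE fun T hT => ?_
    have hlink : #(commonLink E 1 T) < t :=
      card_lt_of_not_hasBox_one (fun f hf => card_of_mem_commonLink hf)
        fun h => hbox (hasBox_of_hasBox_commonLink (by omega) (mem_powersetCard.mp hT).2 h)
    have hlink' : (#(commonLink E 1 T) : ℝ) ≤ t := by exact_mod_cast hlink.le
    simpa using hlink'
  | succ r ih =>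
    refine card_le_of_card_commonLink_le ht hV hE fun T hT => ?_
    have hlink := ih (E := commonLink E (r + 2) T) (fun f hf => card_of_mem_commonLink hf)
      fun h => hbox (hasBox_of_hasBox_commonLink (by omega) (mem_powersetCard.mp hT).2 h)
    have hexp : ((r + 1 : ℕ) + 1 : ℝ) = r + 2 := by push_cast; ring
    rw [hexp]
    refine hlink.trans (mul_le_mul_of_nonneg_right ?_ (by positivity))
    have ht' : (2 : ℝ) ≤ t := by exact_mod_cast ht
    linarith

end Hypergraph

section InconsistentFamily

variable {X A : Type*} {S : A → Set X}

/-- In the paper's terms: the members of `𝒯` are consistent and pairwise 1-inconsistent. -/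
structure IsInconsistentFamily (S : A → Set X) (𝒯 : Finset (Finset A)) : Prop where
  consistent : ∀ P ∈ 𝒯, (⋂ a ∈ P, S a).Nonempty
  pairwise_inconsistent : ∀ P ∈ 𝒯, ∀ Q ∈ 𝒯, P ≠ Q → ∃ a ∈ P, ∃ b ∈ Q, S a ∩ S b = ∅

lemma notMem_of_inter_eq_empty {P : Finset A} {a b : A} (hP : (⋂ c ∈ P, S c).Nonempty)
    (ha : a ∈ P) (hab : S a ∩ S b = ∅) : b ∉ P := by
  intro hb
  obtain ⟨x, hx⟩ := hP
  rw [Set.mem_iInter₂] at hx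
  exact Set.eq_empty_iff_forall_notMem.mp hab x ⟨hx a ha, hx b hb⟩

lemma IsInconsistentFamily.subset {𝒯 𝒰 : Finset (Finset A)} (h : IsInconsistentFamily S 𝒯)
    (h𝒰 : 𝒰 ⊆ 𝒯) : IsInconsistentFamily S 𝒰 :=
  ⟨fun P hP => h.consistent P (h𝒰 hP),
    fun P hP Q hQ => h.pairwise_inconsistent P (h𝒰 hP) Q (h𝒰 hQ)⟩

/-- An `r × t` array witnessing 2-TP₂. -/
def HasGrid (S : A → Set X) (r t : ℕ) : Prop :=
  ∃ a : Fin r → Fin t → A,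
    (∀ i : Fin r, ∀ j j' : Fin t, j ≠ j' → S (a i j) ∩ S (a i j') = ∅) ∧
    ∀ f : Fin r → Fin t, (⋂ i, S (a i (f i))).Nonempty

theorem IsInconsistentFamily.hasGrid_of_hasBox [DecidableEq A] {E : Finset (Finset A)} {r t : ℕ}
    (hE : IsInconsistentFamily S E) (hbox : HasBox E r t) : HasGrid S r t := by
  obtain ⟨W, hWc, hWd, hWt⟩ := hbox
  let a : Fin r → Fin t → A := fun i j => ((W i).equivFinOfCardEq (hWc i)).symm j
  have ha_mem : ∀ i j, a i j ∈ W i := fun i j => (((W i).equivFinOfCardEq (hWc i)).symm j).2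
  have ha_inj : ∀ i, Function.Injective (a i) :=
    fun i => Subtype.val_injective.comp ((W i).equivFinOfCardEq (hWc i)).symm.injective
  let edge : (Fin r → Fin t) → Finset A := fun f => univ.image fun i => a i (f i)
  have hedge : ∀ f, edge f ∈ E := fun f => hWt _ fun i => ha_mem i (f i)
  have hmem_edge : ∀ {f i}, a i (f i) ∈ edge f := fun {f i} => mem_image_of_mem _ (mem_univ i)
  refine ⟨a, fun i j j' hjj' => ?_, fun f => ?_⟩
  · let f : Fin r → Fin t := fun _ => j
    let f' := Function.update f i j'
    have hagree : ∀ i', i' ≠ i → f' i' = f i' := fun i' h => Function.update_of_ne h _ _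
    have hnew : a i j' ∉ edge f := by
      simp only [edge, mem_image, mem_univ, true_and, not_exists]
      intro i' h
      rcases eq_or_ne i' i with rfl | hi
      · exact hjj' (ha_inj i' h)
      · exact disjoint_left.mp (hWd i' i hi) (h ▸ ha_mem i' (f i')) (ha_mem i j')
    have hne : edge f ≠ edge f' :=
      fun h => hnew (h ▸ by simpa [f'] using hmem_edge (f := f') (i := i))
    obtain ⟨u, hu, v, hv, huv⟩ := hE.pairwise_inconsistent _ (hedge f) _ (hedge f') hne
    have hu' : u ∉ edge f' :=
      notMem_of_inter_eq_empty (hE.consistent _ (hedge f')) hv (Set.inter_comm _ _ ▸ huv)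
    have hv' : v ∉ edge f := notMem_of_inter_eq_empty (hE.consistent _ (hedge f)) hu huv
    obtain ⟨iu, -, rfl⟩ := mem_image.mp hu
    obtain ⟨iv, -, rfl⟩ := mem_image.mp hv
    obtain rfl : iu = i := by
      by_contra h
      exact hu' (hagree iu h ▸ hmem_edge)
    obtain rfl : iv = iu := by
      by_contra h
      exact hv' (hagree iv h ▸ hmem_edge)
    simpa [f', f] using huv
  · simpa [edge, set_biInter_finset_image] using hE.consistent _ (hedge f)

theorem IsInconsistentFamily.card_le_of_not_hasGrid [Fintype A] [DecidableEq A]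
    {E : Finset (Finset A)} {d : ℕ} (hE : IsInconsistentFamily S E) (hd : 2 ≤ d)
    (hA : d ^ 2 ≤ Fintype.card A) (hEd : ∀ P ∈ E, #P = d) (hgrid : ¬ HasGrid S d d) :
    (#E : ℝ) ≤ 3 / 2 * (Fintype.card A : ℝ) ^ ((d : ℝ) - 1 / (d : ℝ) ^ (d - 1)) := by
  obtain ⟨r, rfl⟩ : ∃ r, d = r + 2 := ⟨d - 2, by omega⟩
  convert card_le_of_not_hasBox hd hA hEd fun hbox => hgrid (hE.hasGrid_of_hasBox hbox) using 3
  rw [show r + 2 - 1 = r + 1 by omega]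
  push_cast
  ring

variable [DecidableEq A]

def vertexLink (𝒯 : Finset (Finset A)) (a : A) : Finset (Finset A) :=
  {P ∈ 𝒯 | a ∈ P}.image (·.erase a)

lemma IsInconsistentFamily.vertexLink_filter_nonempty {𝒯 : Finset (Finset A)}
    (h : IsInconsistentFamily S 𝒯) (a : A) :
    IsInconsistentFamily S {P ∈ vertexLink 𝒯 a | P.Nonempty} := by
  refine IsInconsistentFamily.subset ⟨?_, ?_⟩ (filter_subset _ _)
  · simp only [vertexLink, mem_image, mem_filter]
    rintro _ ⟨P, ⟨hP, -⟩, rfl⟩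
    obtain ⟨x, hx⟩ := h.consistent P hP
    simp only [Set.mem_iInter₂] at hx
    exact ⟨x, Set.mem_iInter₂.mpr fun b hb => hx b (mem_of_mem_erase hb)⟩
  · simp only [vertexLink, mem_image, mem_filter]
    rintro _ ⟨P, ⟨hP, haP⟩, rfl⟩ _ ⟨Q, ⟨hQ, haQ⟩, rfl⟩ hPQ
    obtain ⟨b, hb, c, hc, hbc⟩ :=
      h.pairwise_inconsistent P hP Q hQ fun h => hPQ (congrArg (·.erase a) h)
    -- `a` lies in both consistent sets, so it meets everything in either of them.
    have hba : b ≠ a := by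
      rintro rfl
      exact notMem_of_inter_eq_empty (h.consistent Q hQ) haQ hbc hc
    have hca : c ≠ a := by
      rintro rfl
      exact notMem_of_inter_eq_empty (h.consistent P hP) haP (Set.inter_comm _ _ ▸ hbc) hb
    exact ⟨b, mem_erase.mpr ⟨hba, hb⟩, c, mem_erase.mpr ⟨hca, hc⟩, hbc⟩

lemma card_filter_mem_le_card_vertexLink (𝒯 : Finset (Finset A)) (a : A) :
    #{P ∈ 𝒯 | a ∈ P} ≤ #{P ∈ vertexLink 𝒯 a | P.Nonempty} + 1 := by
  have hinj : #(vertexLink 𝒯 a) = #{P ∈ 𝒯 | a ∈ P} :=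
    card_image_of_injOn fun P hP Q hQ => erase_injOn' a (mem_filter.mp hP).2 (mem_filter.mp hQ).2
  have hempty : #{P ∈ vertexLink 𝒯 a | ¬ P.Nonempty} ≤ 1 :=
    card_le_one.mpr fun P hP Q hQ => by
      rw [not_nonempty_iff_eq_empty.mp (mem_filter.mp hP).2,
        not_nonempty_iff_eq_empty.mp (mem_filter.mp hQ).2]
  rw [← hinj, ← card_filter_add_card_filter_not (s := vertexLink 𝒯 a) fun P => P.Nonempty]
  omega

variable [Fintype A]

lemma card_le_sum_card_filter_mem {𝒯 : Finset (Finset A)} (h𝒯 : ∀ P ∈ 𝒯, P.Nonempty) :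
    #𝒯 ≤ ∑ a, #{P ∈ 𝒯 | a ∈ P} := by
  refine (card_le_card fun P hP => ?_).trans card_biUnion_le
  obtain ⟨a, ha⟩ := h𝒯 P hP
  exact mem_biUnion.mpr ⟨a, mem_univ a, mem_filter.mpr ⟨hP, ha⟩⟩

lemma card_filter_card_le_le (m : ℕ) :
    #{P : Finset A | 1 ≤ #P ∧ #P ≤ m} ≤ m * Fintype.card A ^ m :=
  calc #{P : Finset A | 1 ≤ #P ∧ #P ≤ m}
      ≤ #((Icc 1 m).biUnion fun i => (univ : Finset A).powersetCard i) :=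
        card_le_card fun P hP => by
          simp only [mem_filter, mem_univ, true_and] at hP
          exact mem_biUnion.mpr ⟨#P, mem_Icc.mpr hP, mem_powersetCard.mpr ⟨subset_univ P, rfl⟩⟩
    _ ≤ ∑ i ∈ Icc 1 m, #((univ : Finset A).powersetCard i) := card_biUnion_le
    _ ≤ ∑ _i ∈ Icc 1 m, Fintype.card A ^ m := by
        refine sum_le_sum fun i hi => ?_
        obtain ⟨hi1, him⟩ := mem_Icc.mp hi
        rw [card_powersetCard, card_univ]
        refine (Nat.choose_le_pow _ _).trans ?_
        rcases (Fintype.card A).eq_zero_or_pos with h0 | hpos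
        · simp [h0, zero_pow (by omega : i ≠ 0)]
        · exact Nat.pow_le_pow_right hpos him
    _ = m * Fintype.card A ^ m := by rw [sum_const, Nat.card_Icc, smul_eq_mul, Nat.add_sub_cancel]

lemma IsInconsistentFamily.card_le_add_of_uniform {d : ℕ} {M : ℝ}
    (hM : ∀ 𝒰 : Finset (Finset A), IsInconsistentFamily S 𝒰 → (∀ P ∈ 𝒰, #P = d) → (#𝒰 : ℝ) ≤ M)
    {𝒯 : Finset (Finset A)} (h : IsInconsistentFamily S 𝒯) (hsize : ∀ P ∈ 𝒯, 1 ≤ #P ∧ #P ≤ d) :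
    (#𝒯 : ℝ) ≤ M + d * (Fintype.card A : ℝ) ^ (d - 1) := by
  have huniform : (#{P ∈ 𝒯 | #P = d} : ℝ) ≤ M :=
    hM _ (h.subset (filter_subset _ _)) fun P hP => (mem_filter.mp hP).2
  have hsmall : #{P ∈ 𝒯 | ¬ #P = d} ≤ (d - 1) * Fintype.card A ^ (d - 1) := by
    refine (card_le_card fun P hP => ?_).trans (card_filter_card_le_le (d - 1))
    obtain ⟨hP, hPd⟩ := mem_filter.mp hP
    have := hsize P hP
    exact mem_filter.mpr ⟨mem_univ P, this.1, by omega⟩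
  have hsmall' : (#{P ∈ 𝒯 | ¬ #P = d} : ℝ) ≤ d * (Fintype.card A : ℝ) ^ (d - 1) :=
    calc (#{P ∈ 𝒯 | ¬ #P = d} : ℝ) ≤ ((d - 1) * Fintype.card A ^ (d - 1) : ℕ) := by
          exact_mod_cast hsmall
      _ ≤ d * (Fintype.card A : ℝ) ^ (d - 1) := by
          push_cast
          gcongr
          exact_mod_cast Nat.sub_le d 1
  rw [← card_filter_add_card_filter_not (s := 𝒯) fun P => #P = d]
  push_cast
  linarith

lemma IsInconsistentFamily.card_le_mul_add_one {m : ℕ} {B : ℝ}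
    (hB : ∀ 𝒰 : Finset (Finset A), IsInconsistentFamily S 𝒰 → (∀ P ∈ 𝒰, 1 ≤ #P ∧ #P ≤ m) →
      (#𝒰 : ℝ) ≤ B)
    {𝒯 : Finset (Finset A)} (h : IsInconsistentFamily S 𝒯)
    (hsize : ∀ P ∈ 𝒯, 1 ≤ #P ∧ #P ≤ m + 1) :
    (#𝒯 : ℝ) ≤ Fintype.card A * (B + 1) := by
  have hfiber : ∀ a, (#{P ∈ 𝒯 | a ∈ P} : ℝ) ≤ B + 1 := by
    intro a
    have hlink := hB _ (h.vertexLink_filter_nonempty a) (by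
      simp only [vertexLink, mem_filter, mem_image]
      rintro _ ⟨⟨P, ⟨hP, haP⟩, rfl⟩, hne⟩
      have := hsize P hP
      exact ⟨hne.card_pos, by rw [card_erase_of_mem haP]; omega⟩)
    have hcard : (#{P ∈ 𝒯 | a ∈ P} : ℝ) ≤ #{P ∈ vertexLink 𝒯 a | P.Nonempty} + 1 := by
      exact_mod_cast card_filter_mem_le_card_vertexLink 𝒯 a
    linarith
  calc (#𝒯 : ℝ) ≤ ∑ a, (#{P ∈ 𝒯 | a ∈ P} : ℝ) := by
        exact_mod_cast card_le_sum_card_filter_mem fun P hP => card_pos.mp (hsize P hP).1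
    _ ≤ ∑ _a : A, (B + 1) := sum_le_sum fun a _ => hfiber a
    _ = Fintype.card A * (B + 1) := by rw [sum_const, card_univ, nsmul_eq_mul]

theorem IsInconsistentFamily.card_le {d : ℕ} {M : ℝ} (hd : 1 ≤ d)
    (hM : ∀ 𝒰 : Finset (Finset A), IsInconsistentFamily S 𝒰 → (∀ P ∈ 𝒰, #P = d) → (#𝒰 : ℝ) ≤ M) :
    ∀ (j : ℕ) {𝒯 : Finset (Finset A)}, IsInconsistentFamily S 𝒯 →
      (∀ P ∈ 𝒯, 1 ≤ #P ∧ #P ≤ d + j) →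
      (#𝒯 : ℝ) ≤ (Fintype.card A : ℝ) ^ j * M
        + ((d + j : ℕ) : ℝ) * (Fintype.card A : ℝ) ^ (d + j - 1)
  | 0, 𝒯, h, hsize => by simpa using h.card_le_add_of_uniform hM hsize
  | j + 1, 𝒯, h, hsize => by
    set N : ℝ := (Fintype.card A : ℝ)
    have hN : N ≤ N ^ (d + j) := by
      simp only [N]
      exact_mod_cast Nat.le_self_pow (by omega) _
    have hpow : N ^ (d + j - 1) * N = N ^ (d + (j + 1) - 1) := by
      rw [← pow_succ, show d + j - 1 + 1 = d + (j + 1) - 1 by omega]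
    calc (#𝒯 : ℝ)
        ≤ N * (N ^ j * M + ((d + j : ℕ) : ℝ) * N ^ (d + j - 1) + 1) :=
          h.card_le_mul_add_one (fun 𝒰 h𝒰 hsize𝒰 => IsInconsistentFamily.card_le hd hM j h𝒰 hsize𝒰)
            hsize
      _ = N ^ (j + 1) * M + ((d + j : ℕ) : ℝ) * N ^ (d + (j + 1) - 1) + N := by
          rw [← hpow]
          ring
      _ ≤ N ^ (j + 1) * M + ((d + (j + 1) : ℕ) : ℝ) * N ^ (d + (j + 1) - 1) := by
          rw [show d + (j + 1) - 1 = d + j by omega]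
          push_cast
          linarith

end InconsistentFamily

/-- (Combinatorial core of "power saving characterizes 2-TP₂".) Let `d ≥ 2` and `k ≥ d`.
There is `L ∈ ℕ` (depending only on `k, d`) such that for every `l ≥ L`: if `A` has `l`
elements, `(S_a)_{a∈A}` is a family of subsets of `X`, and `𝒮` is a collection of
consistent subsets of `A` of size between `1` and `k` which are pairwise `1`-inconsistent
with `|𝒮| > 2·l^{k − 1/d^{d−1}}`, then there is a `d × d` grid `(a_{i,j})` in `A` whose
rows give pairwise disjoint sets while every transversal has non-empty intersection. -/
theorem power_saving_grid (d k : ℕ) (hd : 2 ≤ d) (hk : d ≤ k) :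
    ∃ L : ℕ, ∀ l : ℕ, L ≤ l →
      ∀ (X : Type*) (A : Type*) [Fintype A], Fintype.card A = l →
        ∀ (S : A → Set X) (𝒮 : Finset (Finset A)),
          (∀ P ∈ 𝒮, 1 ≤ P.card ∧ P.card ≤ k ∧ (⋂ a ∈ P, S a).Nonempty) →
          (∀ P ∈ 𝒮, ∀ Q ∈ 𝒮, P ≠ Q → ∃ a ∈ P, ∃ b ∈ Q, S a ∩ S b = ∅) →
          2 * (l : ℝ) ^ ((k : ℝ) - 1 / (d : ℝ) ^ (d - 1)) < (𝒮.card : ℝ) →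
          ∃ a : Fin d → Fin d → A,
            (∀ i : Fin d, ∀ j j' : Fin d, j ≠ j' → S (a i j) ∩ S (a i j') = ∅) ∧
            ∀ f : Fin d → Fin d, (⋂ i, S (a i (f i))).Nonempty := by
  classical
  refine ⟨4 * k ^ 2, fun l hl X A _ hA S 𝒮 hsize hinc hcard => ?_⟩
  subst hA
  by_contra hgrid
  obtain ⟨j, rfl⟩ := Nat.exists_eq_add_of_le hk
  have hN : 4 * ((d + j : ℕ) : ℝ) ^ 2 ≤ Fintype.card A := by exact_mod_cast hl
  have hN1 : (1 : ℝ) ≤ Fintype.card A := by exact_mod_cast (by nlinarith : 1 ≤ Fintype.card A)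
  have h𝒮 : IsInconsistentFamily S 𝒮 := ⟨fun P hP => (hsize P hP).2.2, hinc⟩
  have hbound := h𝒮.card_le (by omega)
    (fun E hE hEd => hE.card_le_of_not_hasGrid hd (by nlinarith) hEd hgrid) j
    fun P hP => ⟨(hsize P hP).1, (hsize P hP).2.1⟩
  have hε := one_div_pow_le_half (n := d - 1) hd (by omega)
  linarith [pow_mul_add_le_two_mul_rpow (by omega) hN1 hN hε]
end

section
/- Let κ ≤ λ be infinite cardinals such that λ^κ > λ + 2^κ. Then there exist cardinals θ and μ such that: θ is a regular cardinal with θ ≤ κ; μ ≤ λ; μ^θ = λ^κ; and μ^ν ≤ λ for every cardinal ν < θ. (Consequently the tree μ^{<θ} has at most λ nodes, θ levels, and λ^κ branches, so in particular if λ^κ > 2^κ then the tree-exponent λ^{κ,tr} equals λ^κ.) -/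
open Cardinal

/-!
Let `μ` be least with `λ ≤ μ ^ κ` and `θ = cf μ`. Minimality gives `μ ^ κ = λ ^ κ` and
`ρ ^ κ ≤ μ` for all `ρ < μ`, and `2 ^ κ < λ` forces `κ < μ`. For `ν < θ` every map `ν → μ`
is bounded below `μ`, so `μ ^ ν ≤ μ` as soon as `ρ ^ ν ≤ μ` for all `ρ < μ`; with `ν = κ`
this would give `λ ^ κ ≤ λ`, hence `θ ≤ κ < μ` and `μ` is singular, so a limit cardinal.
König's inequality then gives `μ ≤ ∏_{i<θ} μ_i` with `μ_i < μ`, so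
`μ ^ κ ≤ ∏ μ_i ^ κ ≤ μ ^ θ`.
-/

universe u

namespace Cardinal

open Set Order Ordinal

variable {μ ν κ : Cardinal.{u}}

theorem power_le_self_of_lt_cof_ord (hμ : ℵ₀ ≤ μ) (hν : ν < μ.ord.cof)
    (H : ∀ ρ < μ, ρ ^ ν ≤ μ) : μ ^ ν ≤ μ := by
  induction μ using Cardinal.inductionOn with | mk α
  induction ν using Cardinal.inductionOn with | mk β
  obtain ⟨_, _, hα⟩ := exists_ord_eq_type_lt α
  rw [hα, cof_type] at hν
  have hcover : (⋃ x : α, {f : β → α | ∀ i, f i < x}) = Set.univ := by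
    refine eq_univ_of_forall fun f => mem_iUnion.2 ?_
    have : ¬ IsCofinal (range f) := fun hf => (cof_le hf).not_gt (mk_range_le.trans_lt hν)
    simpa [IsCofinal] using this
  calc #α ^ #β = #(β → α) := power_def ..
    _ = #(⋃ x : α, {f : β → α | ∀ i, f i < x}) := by rw [hcover, mk_univ]
    _ ≤ sum fun x : α => #{f : β → α | ∀ i, f i < x} := mk_iUnion_le_sum_mk
    _ = sum fun x : α => #(Iio x) ^ #β := by
        congr! 2 with x
        rw [power_def]
        exact mk_congr (Equiv.subtypePiEquivPi (p := fun _ y => y < x))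
    _ ≤ sum fun _ : α => #α := sum_le_sum _ _ fun x => H _ (mk_Iio_lt x hα)
    _ = #α := by rw [sum_const', mul_eq_self hμ]

theorem IsSingular.exists_le_prod (hμ : μ.IsSingular) :
    ∃ (ι : Type u) (b : ι → Cardinal.{u}), #ι = μ.ord.cof ∧ (∀ i, b i < μ) ∧ μ ≤ prod b := by
  induction μ using Cardinal.inductionOn with | mk α
  obtain ⟨_, _, hα⟩ := exists_ord_eq_type_lt α
  have : NoMaxOrder α := by
    rw [← isSuccPrelimit_type_lt_iff, ← hα]
    exact (isSuccLimit_ord hμ.aleph0_le).isSuccPrelimit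
  obtain ⟨s, hs, hs'⟩ := exists_cof_eq α
  refine ⟨s, fun x => succ #(Iio x.1), by rw [hs', hα, cof_type],
    fun x => hμ.isSuccLimit.succ_lt (mk_Iio_lt x.1 hα), ?_⟩
  calc #α = #(⋃ x : s, Iio x.1) := by
        rw [← mk_univ, ← isCofinal_iff_iUnion_Iio_eq_univ.1 hs, biUnion_eq_iUnion]
    _ ≤ sum fun x : s => #(Iio x.1) := mk_iUnion_le_sum_mk
    _ ≤ prod fun x : s => succ #(Iio x.1) := (sum_lt_prod _ _ fun _ => lt_succ _).le

theorem prod_power {ι : Type u} (f : ι → Cardinal.{u}) (c : Cardinal.{u}) :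
    prod f ^ c = prod fun i => f i ^ c := by
  induction c using Cardinal.inductionOn with | mk γ
  obtain ⟨α, rfl⟩ : ∃ α : ι → Type u, f = fun i => #(α i) := ⟨fun i => (f i).out, by simp⟩
  simp only [power_def, ← mk_pi]
  exact mk_congr (Equiv.piComm _)

theorem IsSingular.power_le_power_cof_ord (hμ : μ.IsSingular) (H : ∀ ρ < μ, ρ ^ κ ≤ μ) :
    μ ^ κ ≤ μ ^ μ.ord.cof := by
  obtain ⟨ι, b, hι, hb, hμb⟩ := hμ.exists_le_prod
  calc μ ^ κ ≤ prod b ^ κ := power_le_power_right hμb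
    _ = prod fun i => b i ^ κ := prod_power b κ
    _ ≤ prod fun _ : ι => μ := prod_le_prod _ _ fun i => H _ (hb i)
    _ = μ ^ μ.ord.cof := by rw [prod_const', hι]

theorem power_power_self (hκ : ℵ₀ ≤ κ) (c : Cardinal.{u}) : (c ^ κ) ^ κ = c ^ κ := by
  rw [← power_mul, mul_eq_self hκ]

theorem exists_minimal_le_power {lam : Cardinal.{u}} (h : lam ≤ lam ^ κ) :
    ∃ μ ≤ lam, lam ≤ μ ^ κ ∧ ∀ ρ < μ, ρ ^ κ < lam := by
  let S := {c : Cardinal.{u} | lam ≤ c ^ κ}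
  exact ⟨sInf S, csInf_le' h, csInf_mem (s := S) ⟨lam, h⟩,
    fun _ hρ => not_le.1 fun h' => (csInf_le' (s := S) h').not_gt hρ⟩

theorem exists_power_eq_of_add_two_power_lt {lam : Cardinal.{u}} (hκ : ℵ₀ ≤ κ)
    (h : lam + 2 ^ κ < lam ^ κ) : ∃ μ ≤ lam, μ ^ κ = lam ^ κ ∧ κ < μ ∧ ∀ ρ < μ, ρ ^ κ ≤ μ := by
  obtain ⟨μ, hμlam, hlamμ, hmin⟩ := exists_minimal_le_power (le_self_add.trans_lt h).le
  have h2μ : 2 ^ κ < μ := by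
    by_contra! hμ2
    have hlam2 : lam ≤ 2 ^ κ :=
      hlamμ.trans <| (power_le_power_right hμ2).trans_eq (power_power_self hκ 2)
    exact h.not_ge <|
      ((power_le_power_right hlam2).trans_eq (power_power_self hκ 2)).trans le_add_self
  refine ⟨μ, hμlam, ?_, (cantor κ).trans h2μ, fun ρ hρ => ?_⟩
  · exact (power_le_power_right hμlam).antisymm <|
      (power_le_power_right hlamμ).trans_eq (power_power_self hκ μ)
  · by_contra! hμρ
    exact (hmin ρ hρ).not_ge <|
      hlamμ.trans <| (power_le_power_right hμρ.le).trans_eq (power_power_self hκ ρ)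

end Cardinal

theorem tree_exponent_lemma_general (κ lam : Cardinal) (hκ : ℵ₀ ≤ κ)
    (h : lam + 2 ^ κ < lam ^ κ) :
    ∃ θ μ : Cardinal, θ.IsRegular ∧ θ ≤ κ ∧ μ ≤ lam ∧ μ ^ θ = lam ^ κ ∧
      ∀ ν : Cardinal, ν < θ → μ ^ ν ≤ lam := by
  obtain ⟨μ, hμlam, hμκ, hκμ, hsmall⟩ := exists_power_eq_of_add_two_power_lt hκ h
  have hμ : ℵ₀ ≤ μ := hκ.trans hκμ.le
  have hθκ : μ.ord.cof ≤ κ := by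
    by_contra! hκθ
    exact (le_self_add.trans_lt h).not_ge <|
      hμκ ▸ (power_le_self_of_lt_cof_ord hμ hκθ hsmall).trans hμlam
  have hsing : μ.IsSingular := ⟨hμ, (hθκ.trans_lt hκμ).ne⟩
  refine ⟨μ.ord.cof, μ, isRegular_cof (isSuccLimit_ord hμ), hθκ, hμlam, ?_, fun ν hν => ?_⟩
  · exact hμκ ▸ (power_le_power_left hsing.pos.ne' hθκ).antisymm
      (hsing.power_le_power_cof_ord hsmall)
  · refine (power_le_self_of_lt_cof_ord hμ hν fun ρ hρ => ?_).trans hμlam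
    rcases eq_or_ne ρ 0 with rfl | hρ0
    · exact (zero_power_le ν).trans (one_le_aleph0.trans hμ)
    · exact (power_le_power_left hρ0 (hν.le.trans hθκ)).trans (hsmall ρ hρ)

/-- (Tree exponent lemma.) Let `κ ≤ λ` be infinite cardinals with `λ^κ > λ + 2^κ`. Then
there exist cardinals `θ` and `μ` such that `θ` is regular with `θ ≤ κ`, `μ ≤ λ`,
`μ^θ = λ^κ`, and `μ^ν ≤ λ` for every cardinal `ν < θ`. -/
theorem tree_exponent_lemma (κ lam : Cardinal) (hκ : ℵ₀ ≤ κ) (hκlam : κ ≤ lam)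
    (h : lam + 2 ^ κ < lam ^ κ) :
    ∃ θ μ : Cardinal, θ.IsRegular ∧ θ ≤ κ ∧ μ ≤ lam ∧ μ ^ θ = lam ^ κ ∧
      ∀ ν : Cardinal, ν < θ → μ ^ ν ≤ lam :=
  tree_exponent_lemma_general κ lam hκ h
end
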